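/- arXiv:1106.4588 — 8 statements merged into one kernel-verified Lean document; each statement's English description precedes it below -/
import Mathlib

section
/- Let A be a real n × n matrix. Then the supremum of trace(U * A) over all orthogonal n × n matrices U is attained, and this maximum equals the trace of the positive semidefinite square root of Aᵀ A, i.e. the sum of the singular values of A. -/
open Matrix

noncomputable section

section OldSqrt

open scoped ComplexOrder

/-- The positive semidefinite square root, as defined in Mathlib (Dec 2024), since removed. -/
def Matrix.PosSemidef.sqrt {n : Type*} [Fintype n] [DecidableEq n] {𝕜 : Type*} [RCLike 𝕜]
    {A : Matrix n n 𝕜} (hA : A.PosSemidef) : Matrix n n 𝕜 :=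
  hA.1.eigenvectorUnitary.1 * diagonal ((↑) ∘ (√·) ∘ hA.1.eigenvalues) *
  (star hA.1.eigenvectorUnitary : Matrix n n 𝕜)

end OldSqrt

/-! The orthogonal group is compact, so `V ↦ trace (V * A)` attains its maximum at some `U`.
Then `M = U * A` satisfies `trace (Q * M) ≤ trace M` for every orthogonal `Q`. Plane rotations
`Q` force `M` to be symmetric and Householder reflections `Q = 1 - 2 v vᵀ / (vᵀ v)` force
`vᵀ M v ≥ 0`, so `M` is positive semidefinite with `M * M = Mᵀ * M = Aᵀ * A`: it is the square
root of `Aᵀ * A`. -/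

-- Test the hypothesis at `(c, s) = (a, b) / √(a ^ 2 + b ^ 2)`.
theorem Real.eq_zero_of_forall_unit_circle {a b : ℝ}
    (h : ∀ c s : ℝ, c ^ 2 + s ^ 2 = 1 → (c - 1) * a + s * b ≤ 0) : b = 0 := by
  by_contra hb
  set r := √(a ^ 2 + b ^ 2)
  have hr2 : r ^ 2 = a ^ 2 + b ^ 2 := Real.sq_sqrt (by positivity)
  have hr : 0 < r := Real.sqrt_pos.2 (by positivity)
  have hra : r ≤ a := by
    have := h (a / r) (b / r) (by field_simp; linarith)
    field_simp at this
    nlinarith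
  nlinarith [sq_pos_of_ne_zero hb]

namespace Matrix

variable {n : Type*} [Fintype n] [DecidableEq n]

section Sqrt

variable {𝕜 : Type*} [RCLike 𝕜]

open scoped ComplexOrder MatrixOrder

theorem PosSemidef.sqrt_eq_cfcSqrt {A : Matrix n n 𝕜} (hA : A.PosSemidef) :
    hA.sqrt = CFC.sqrt A := by
  rw [CFC.sqrt_eq_cfc, cfc_nnreal_eq_real _ _ hA.nonneg, hA.1.cfc_eq, IsHermitian.cfc,
    Unitary.conjStarAlgAut_apply, PosSemidef.sqrt]
  simp only [Real.sqrt]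

theorem PosSemidef.sqrt_eq_of_mul_self_eq {A B : Matrix n n 𝕜} (hA : A.PosSemidef)
    (hB : B.PosSemidef) (h : B * B = A) : hA.sqrt = B := by
  rw [hA.sqrt_eq_cfcSqrt, CFC.sqrt_unique h hB.nonneg]

end Sqrt

theorem isCompact_unitaryGroup {𝕜 : Type*} [RCLike 𝕜] :
    IsCompact (unitaryGroup n 𝕜 : Set (Matrix n n 𝕜)) := by
  refine (isCompact_univ_pi fun _ ↦ isCompact_univ_pi fun _ ↦
    isCompact_closedBall (0 : 𝕜) 1).of_isClosed_subset (isClosed_unitary (R := Matrix n n 𝕜)) ?_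
  intro U hU i _ j _
  simpa using entry_norm_bound_of_unitary hU i j

section Orthogonal

variable {R : Type*} [CommRing R] {i j : n} {c s : R}

def planeRotation (i j : n) (c s : R) : Matrix n n R :=
  1 + (c - 1) • (single i i 1 + single j j 1) + s • (single i j 1 - single j i 1)

theorem planeRotation_mem_orthogonalGroup (hij : i ≠ j) (hcs : c ^ 2 + s ^ 2 = 1) :
    planeRotation i j c s ∈ orthogonalGroup n R := by
  rw [mem_orthogonalGroup_iff', planeRotation]
  simp only [transpose_add, transpose_smul, transpose_sub, transpose_one, transpose_single,
    add_mul, mul_add, sub_mul, mul_sub, mul_smul_comm, smul_mul_assoc, one_mul, mul_one,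
    single_mul_single_same, single_mul_single_of_ne, ne_eq, hij, Ne.symm hij, not_false_eq_true,
    zero_add, add_zero, sub_zero, zero_sub]
  linear_combination (norm := module) hcs • (single i i (1 : R) + single j j 1)

theorem trace_planeRotation_mul (M : Matrix n n R) :
    (planeRotation i j c s * M).trace
      = M.trace + (c - 1) * (M i i + M j j) + s * (M j i - M i j) := by
  simp only [planeRotation, add_mul, sub_mul, smul_mul_assoc, one_mul, trace_add, trace_sub,
    trace_smul, trace_single_mul, smul_eq_mul]

variable {K : Type*} [Field K]

-- For `v = 0` the junk value `2 / 0 = 0` makes this `1`, so no hypothesis `v ≠ 0` is needed.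
def householder (v : n → K) : Matrix n n K :=
  1 - (2 / (v ⬝ᵥ v)) • vecMulVec v v

theorem householder_mem_orthogonalGroup (v : n → K) :
    householder v ∈ orthogonalGroup n K := by
  have hcoeff : (2 / (v ⬝ᵥ v)) ^ 2 * (v ⬝ᵥ v) = 2 * (2 / (v ⬝ᵥ v)) := by
    rcases eq_or_ne (v ⬝ᵥ v) 0 with h | h
    · simp [h]
    · field_simp
  rw [mem_orthogonalGroup_iff', householder]
  simp only [transpose_sub, transpose_one, transpose_smul, transpose_vecMulVec, sub_mul, mul_sub,
    one_mul, mul_one, smul_mul_smul_comm, vecMulVec_mul_vecMulVec, vecMulVec_smul]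
  linear_combination (norm := module) hcoeff • vecMulVec v v

theorem trace_householder_mul (v : n → K) (M : Matrix n n K) :
    (householder v * M).trace = M.trace - 2 / (v ⬝ᵥ v) * (v ⬝ᵥ (M *ᵥ v)) := by
  rw [householder, sub_mul, one_mul, smul_mul_assoc, vecMulVec_mul, trace_sub, trace_smul,
    trace_vecMulVec, dotProduct_mulVec, dotProduct_comm (v ᵥ* M), smul_eq_mul]

end Orthogonal

variable {M : Matrix n n ℝ}

theorem transpose_eq_self_of_forall_trace_orthogonal_mul_le
    (hM : ∀ Q ∈ orthogonalGroup n ℝ, (Q * M).trace ≤ M.trace) : Mᵀ = M := by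
  ext i j
  rcases eq_or_ne i j with rfl | hij
  · rfl
  have : M j i - M i j = 0 :=
    Real.eq_zero_of_forall_unit_circle (a := M i i + M j j) fun c s hcs ↦ by
      have := hM _ (planeRotation_mem_orthogonalGroup hij hcs)
      rw [trace_planeRotation_mul] at this
      linarith
  rw [transpose_apply]
  linarith

theorem posSemidef_of_forall_trace_orthogonal_mul_le
    (hM : ∀ Q ∈ orthogonalGroup n ℝ, (Q * M).trace ≤ M.trace) : M.PosSemidef := by
  refine .of_dotProduct_mulVec_nonneg ?_ fun v ↦ ?_
  · rw [IsHermitian, conjTranspose_eq_transpose_of_trivial,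
      transpose_eq_self_of_forall_trace_orthogonal_mul_le hM]
  rcases eq_or_ne v 0 with rfl | hv
  · simp
  have hvv : 0 < v ⬝ᵥ v := by simpa using dotProduct_star_self_pos_iff.2 hv
  have := hM _ (householder_mem_orthogonalGroup v)
  rw [trace_householder_mul] at this
  rw [star_trivial]
  exact (mul_nonneg_iff_of_pos_left (by positivity : (0 : ℝ) < 2 / (v ⬝ᵥ v))).1 (by linarith)

end Matrix

/-- For a real `n × n` matrix `A`, the supremum of `trace (U * A)` over all
orthogonal matrices `U` is attained, and the maximum equals the trace of the positive
semidefinite square root of `Aᵀ * A` (the sum of the singular values of `A`). -/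
theorem max_trace_orthogonal_mul
    (n : ℕ) (A : Matrix (Fin n) (Fin n) ℝ)
    (hA : (Aᵀ * A).PosSemidef) :
    ∃ U ∈ Matrix.orthogonalGroup (Fin n) ℝ,
      (∀ V ∈ Matrix.orthogonalGroup (Fin n) ℝ, (V * A).trace ≤ (U * A).trace) ∧
      (U * A).trace = hA.sqrt.trace := by
  obtain ⟨U, hU, hmax⟩ := (isCompact_unitaryGroup (n := Fin n) (𝕜 := ℝ)).exists_isMaxOn
    ⟨1, one_mem _⟩ (continuous_id.matrix_mul continuous_const).matrix_trace.continuousOn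
  refine ⟨U, hU, fun V hV ↦ hmax hV, ?_⟩
  have hUA : ∀ Q ∈ orthogonalGroup (Fin n) ℝ, (Q * (U * A)).trace ≤ (U * A).trace :=
    fun Q hQ ↦ by rw [← mul_assoc]; exact hmax (mul_mem hQ hU)
  have hpsd := posSemidef_of_forall_trace_orthogonal_mul_le hUA
  have hsq : U * A * (U * A) = Aᵀ * A := by
    nth_rw 1 [← transpose_eq_self_of_forall_trace_orthogonal_mul_le hUA]
    rw [transpose_mul, mul_assoc, ← mul_assoc Uᵀ, (mem_orthogonalGroup_iff' _ _).1 hU, one_mul]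
  rw [hA.sqrt_eq_of_mul_self_eq hpsd hsq]
end
end

section
/- Let M, N ⊆ ℝ³ be compact sets, μ a Borel probability measure whose support equals M, and C : M → N a continuous surjective map. If dₚ(M,N;C) = 0, i.e. the infimum over affine isometries R of ℝ³ of ∫_M ‖R x − C x‖² dμ(x) is zero, then M and N are congruent: there exists an affine isometry R* of ℝ³ with R*(M) = N. -/
open MeasureTheory

local notation "E3" => EuclideanSpace ℝ (Fin 3)

open Filter Topology Metric Set

/-! A minimising sequence `Rₙ` has bounded translation parts: by the first moment method each `Rₙ`
moves some point of `M` to within distance `1` of its image under `C`. Isometries with bounded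
translation parts form a compact family, so a subsequence converges pointwise to an isometry `R*`,
and by bounded convergence on the compact set `M` the cost of `R*` is `0`. Hence `R* = C`
`μ`-almost everywhere, and continuity on `M` together with full support gives `R* = C` on `M`,
so `R* '' M = C '' M = N`. -/

theorem eqOn_of_ae_eq_of_measure_ball_pos {X Y : Type*} [PseudoMetricSpace X] [MeasurableSpace X]
    [TopologicalSpace Y] [T2Space Y] {μ : Measure X} {M : Set X} {f g : X → Y}
    (hμM : μ Mᶜ = 0) (hpos : ∀ x ∈ M, ∀ r > (0:ℝ), 0 < μ (ball x r))
    (hf : ContinuousOn f M) (hg : ContinuousOn g M) (hfg : f =ᵐ[μ] g) : EqOn f g M := by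
  intro x hx
  by_contra hne
  have hne_near : ∀ᶠ y in 𝓝[M] x, f y ≠ g y :=
    ((hf x hx).prodMk (hg x hx)).eventually
      ((isOpen_ne_fun continuous_fst continuous_snd).mem_nhds hne)
  obtain ⟨r, hr, hball⟩ := Metric.mem_nhdsWithin_iff.1 hne_near
  have hsub : ball x r ⊆ {y | ¬f y = g y} ∪ Mᶜ := fun y hy =>
    (em (y ∈ M)).elim (fun hyM => Or.inl (hball ⟨hy, hyM⟩)) Or.inr
  exact (hpos x hx r hr).ne' (measure_mono_null hsub (measure_union_null (ae_iff.1 hfg) hμM))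

theorem ae_eq_of_integral_norm_sub_sq_eq_zero {X V : Type*} [MeasurableSpace X]
    [NormedAddCommGroup V] {μ : Measure X} {f g : X → V}
    (hint : Integrable (fun x => ‖f x - g x‖ ^ 2) μ) (h : ∫ x, ‖f x - g x‖ ^ 2 ∂μ = 0) :
    f =ᵐ[μ] g := by
  filter_upwards [(integral_eq_zero_iff_of_nonneg (fun x => by positivity) hint).1 h] with x hx
  simpa [sub_eq_zero] using hx

section AffineIsometry

variable {V : Type*} [NormedAddCommGroup V] [NormedSpace ℝ V]

theorem AffineIsometryEquiv.norm_map_sub_le (R : V ≃ᵃⁱ[ℝ] V) (x y z w : V) :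
    ‖R x - z‖ ≤ ‖x - y‖ + ‖R y - w‖ + ‖w - z‖ :=
  calc ‖R x - z‖ = ‖(R x - R y) + (R y - w) + (w - z)‖ := by abel_nf
    _ ≤ ‖R x - R y‖ + ‖R y - w‖ + ‖w - z‖ := norm_add₃_le
    _ = ‖x - y‖ + ‖R y - w‖ + ‖w - z‖ := by rw [← dist_eq_norm, R.dist_map, dist_eq_norm]

theorem AffineIsometryEquiv.exists_subseq_tendsto [FiniteDimensional ℝ V]
    (R : ℕ → V ≃ᵃⁱ[ℝ] V) {B : ℝ} (hB : ∀ n, ‖R n 0‖ ≤ B) :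
    ∃ (R' : V ≃ᵃⁱ[ℝ] V) (φ : ℕ → ℕ), StrictMono φ ∧
      ∀ x, Tendsto (fun k => R (φ k) x) atTop (𝓝 (R' x)) := by
  let L : ℕ → V →L[ℝ] V := fun n => (R n).linearIsometryEquiv.toContinuousLinearEquiv
  have hR : ∀ n x, R n x = L n x + R n 0 := fun n x =>
    (by simpa only [vadd_eq_add, add_zero] using (R n).map_vadd 0 x :
      R n x = (R n).linearIsometryEquiv x + R n 0)
  have hbdd : ∀ n, (L n, R n 0) ∈ closedBall (0 : (V →L[ℝ] V) × V) (max 1 B) := fun n => by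
    rw [mem_closedBall, dist_zero_right, Prod.norm_def]
    exact max_le_max (ContinuousLinearMap.opNorm_le_bound _ zero_le_one fun x => by simp [L])
      (hB n)
  obtain ⟨⟨A, b⟩, -, φ, hφ, hlim⟩ := tendsto_subseq_of_bounded isBounded_closedBall hbdd
  have hA : ∀ x, Tendsto (fun k => L (φ k) x) atTop (𝓝 (A x)) := fun x =>
    ((ContinuousLinearMap.apply ℝ V x).continuous.tendsto A).comp
      ((continuous_fst.tendsto _).comp hlim)
  have hb : Tendsto (fun k => R (φ k) 0) atTop (𝓝 b) := (continuous_snd.tendsto _).comp hlim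
  have hA_norm : ∀ x, ‖A x‖ = ‖x‖ := fun x =>
    tendsto_nhds_unique (hA x).norm (by simp [L])
  let A' : V →ₗᵢ[ℝ] V := ⟨A, hA_norm⟩
  refine ⟨(A'.toLinearIsometryEquiv rfl).toAffineIsometryEquiv.trans
    (AffineIsometryEquiv.constVAdd ℝ V b), φ, hφ, fun x => ?_⟩
  have := (hA x).add hb
  simp only [← hR] at this
  convert this using 2
  exact add_comm _ _

end AffineIsometry

section ProcrustesCost

variable {V : Type*} [NormedAddCommGroup V] [NormedSpace ℝ V] [MeasurableSpace V]
  {μ : Measure V} {M : Set V} {C : V → V} {K : ℝ}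

theorem ae_norm_map_sub_le (hμM : μ Mᶜ = 0) (hK : ∀ x ∈ M, ‖x‖ + ‖C x‖ ≤ K)
    (R : V ≃ᵃⁱ[ℝ] V) : ∀ᵐ x ∂μ, ‖R x - C x‖ ≤ ‖R 0‖ + K := by
  filter_upwards [mem_ae_iff.2 hμM] with x hx
  have := R.norm_map_sub_le x 0 (C x) 0
  simp only [sub_zero, zero_sub, norm_neg] at this
  linarith [hK x hx]

theorem norm_map_zero_le_of_integral_le_one [IsProbabilityMeasure μ] (hμM : μ Mᶜ = 0)
    (hK : ∀ x ∈ M, ‖x‖ + ‖C x‖ ≤ K) (R : V ≃ᵃⁱ[ℝ] V)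
    (hint : Integrable (fun x => ‖R x - C x‖ ^ 2) μ) (h : ∫ x, ‖R x - C x‖ ^ 2 ∂μ ≤ 1) :
    ‖R 0‖ ≤ K + 1 := by
  obtain ⟨y, hyM, hy⟩ := exists_notMem_null_le_integral hint hμM
  rw [notMem_compl_iff] at hyM
  have hRy : ‖R y - C y‖ ≤ 1 :=
    (pow_le_one_iff_of_nonneg (norm_nonneg _) two_ne_zero).1 (hy.trans h)
  have := R.norm_map_sub_le 0 y 0 (C y)
  simp only [sub_zero, zero_sub, norm_neg] at this
  linarith [hK y hyM]

theorem tendsto_integral_norm_map_sub_sq [IsFiniteMeasure μ] [OpensMeasurableSpace V]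
    [SecondCountableTopology V] (hμM : μ Mᶜ = 0) (hK : ∀ x ∈ M, ‖x‖ + ‖C x‖ ≤ K)
    (hC : AEStronglyMeasurable C μ) {R : ℕ → V ≃ᵃⁱ[ℝ] V} {R' : V ≃ᵃⁱ[ℝ] V} {B : ℝ}
    (hB : ∀ n, ‖R n 0‖ ≤ B) (hlim : ∀ x, Tendsto (fun n => R n x) atTop (𝓝 (R' x))) :
    Tendsto (fun n => ∫ x, ‖R n x - C x‖ ^ 2 ∂μ) atTop (𝓝 (∫ x, ‖R' x - C x‖ ^ 2 ∂μ)) := by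
  refine tendsto_integral_filter_of_norm_le_const
    (Eventually.of_forall fun n => ((R n).continuous.aestronglyMeasurable.sub hC).norm.pow 2)
    ⟨(B + K) ^ 2, Eventually.of_forall fun n => ?_⟩
    (Eventually.of_forall fun x => ((hlim x).sub tendsto_const_nhds).norm.pow 2)
  filter_upwards [ae_norm_map_sub_le hμM hK (R n)] with x hx
  rw [Real.norm_eq_abs, abs_pow, abs_norm]
  exact pow_le_pow_left₀ (norm_nonneg _) (hx.trans (by linarith [hB n])) 2

end ProcrustesCost

theorem procrustes_zero_implies_congruent_general
    (M N : Set E3) (hM : IsCompact M)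
    (μ : Measure E3) [IsProbabilityMeasure μ] (hμM : μ Mᶜ = 0)
    (hsupp : ∀ x ∈ M, ∀ r > (0:ℝ), 0 < μ (Metric.ball x r))
    (C : E3 → E3) (hC : ContinuousOn C M) (hCsurj : C '' M = N)
    (hzero : (⨅ R : E3 ≃ᵃⁱ[ℝ] E3, ∫ x in M, ‖R x - C x‖ ^ 2 ∂μ) = 0) :
    ∃ Rstar : E3 ≃ᵃⁱ[ℝ] E3, ⇑Rstar '' M = N := by
  have hμ : μ.restrict M = μ := Measure.restrict_eq_self_of_ae_mem (mem_ae_iff.2 hμM)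
  rw [hμ] at hzero
  obtain ⟨K, hK⟩ : ∃ K, ∀ x ∈ M, ‖x‖ + ‖C x‖ ≤ K := by
    obtain ⟨K, hK⟩ := hM.exists_bound_of_continuousOn (continuousOn_id.norm.add hC.norm)
    exact ⟨K, fun x hx => (le_abs_self _).trans (hK x hx)⟩
  have hint : ∀ R : E3 ≃ᵃⁱ[ℝ] E3, Integrable (fun x => ‖R x - C x‖ ^ 2) μ := fun R =>
    hμ ▸ ((R.continuous.continuousOn.sub hC).norm.pow 2).integrableOn_compact hM
  have hseq : ∀ n : ℕ, ∃ R : E3 ≃ᵃⁱ[ℝ] E3, ∫ x, ‖R x - C x‖ ^ 2 ∂μ < 1 / (n + 1) := fun n =>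
    exists_lt_of_ciInf_lt (hzero ▸ Nat.one_div_pos_of_nat)
  choose R hR using hseq
  have hR_tendsto : Tendsto (fun n => ∫ x, ‖R n x - C x‖ ^ 2 ∂μ) atTop (𝓝 0) :=
    squeeze_zero (fun n => integral_nonneg fun x => by positivity) (fun n => (hR n).le)
      tendsto_one_div_add_atTop_nhds_zero_nat
  have hR0 : ∀ n, ‖R n 0‖ ≤ K + 1 := fun n =>
    norm_map_zero_le_of_integral_le_one hμM hK (R n) (hint (R n))
      ((hR n).le.trans (div_le_one_of_le₀ (by simp) (by positivity)))
  obtain ⟨R', φ, hφ, hlim⟩ := AffineIsometryEquiv.exists_subseq_tendsto R hR0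
  have hR' : ∫ x, ‖R' x - C x‖ ^ 2 ∂μ = 0 :=
    tendsto_nhds_unique
      (tendsto_integral_norm_map_sub_sq hμM hK (hμ ▸ hC.aestronglyMeasurable hM.measurableSet)
        (fun k => hR0 (φ k)) hlim)
      (hR_tendsto.comp hφ.tendsto_atTop)
  have hEqOn : EqOn R' C M :=
    eqOn_of_ae_eq_of_measure_ball_pos hμM hsupp R'.continuous.continuousOn hC
      (ae_eq_of_integral_norm_sub_sq_eq_zero (hint R') hR')
  exact ⟨R', hEqOn.image_eq.trans hCsurj⟩

/-- For compact `M, N ⊆ ℝ³`, a Borel probability measure `μ` whose support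
equals `M` (full measure on `M` and positive mass near every point of `M`), and a continuous
surjection `C : M → N`, if `dₚ(M,N;C) = 0` then `M` and `N` are congruent. -/
theorem procrustes_zero_implies_congruent
    (M N : Set E3) (hM : IsCompact M) (hN : IsCompact N)
    (μ : Measure E3) [IsProbabilityMeasure μ] (hμM : μ Mᶜ = 0)
    (hsupp : ∀ x ∈ M, ∀ r > (0:ℝ), 0 < μ (Metric.ball x r))
    (C : E3 → E3) (hC : ContinuousOn C M) (hCsurj : C '' M = N)
    (hzero : (⨅ R : E3 ≃ᵃⁱ[ℝ] E3, ∫ x in M, ‖R x - C x‖ ^ 2 ∂μ) = 0) :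
    ∃ Rstar : E3 ≃ᵃⁱ[ℝ] E3, ⇑Rstar '' M = N :=
  procrustes_zero_implies_congruent_general M N hM μ hμM hsupp C hC hCsurj hzero
end

section
/- Let M, N, L ⊆ ℝ³ be compact sets, μ a Borel probability measure on M and ν a Borel probability measure on N. Let C : M → N be a Borel measurable map with pushforward of μ under C equal to ν, and let C' : N → L be a Borel measurable map. Then dₚ(M,L;C'∘C) ≤ dₚ(M,N;C) + dₚ(N,L;C'), where each discrepancy is computed with μ on M and ν on N respectively. -/
/-!
For isometries `R₁, R₂`, the composite `R₂ ∘ R₁` is a competitor for `C' ∘ C`. Minkowski's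
inequality in `L²(μ)` through the intermediate map `R₂ ∘ C` bounds its discrepancy by the
`L²(μ)` distance of `R₂ ∘ R₁` and `R₂ ∘ C`, which equals that of `R₁` and `C` because `R₂` is an
isometry, plus the `L²(μ)` distance of `R₂ ∘ C` and `C' ∘ C`, which is the `L²(ν)` distance of
`R₂` and `C'` because `C` pushes `μ` forward to `ν`. Compactness of `M` and `N` makes the two
maps `R₂ ∘ R₁` and `R₂ ∘ C` square integrable.
-/

open MeasureTheory

noncomputable section

local notation "E3" => EuclideanSpace ℝ (Fin 3)

section L2Distance

variable {α E : Type*} [MeasurableSpace α] {μ : Measure α} [NormedAddCommGroup E]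

theorem MeasureTheory.MemLp.of_ae_mem_of_isBounded [IsFiniteMeasure μ] {p : ENNReal} {s : Set E}
    (hs : Bornology.IsBounded s) {f : α → E} (hf : AEStronglyMeasurable f μ)
    (hfs : ∀ᵐ x ∂μ, f x ∈ s) : MemLp f p μ := by
  obtain ⟨K, hK⟩ := hs.exists_norm_le
  exact .of_bound hf K (hfs.mono fun x hx => hK _ hx)

theorem sqrt_integral_norm_sq_eq_lpNorm {f : α → E} (hf : AEStronglyMeasurable f μ) :
    √(∫ x, ‖f x‖ ^ 2 ∂μ) = lpNorm f 2 μ := by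
  rw [← ENNReal.coe_two, lpNorm_nnreal_eq_integral_norm_rpow two_ne_zero hf,
    Real.sqrt_eq_rpow]
  norm_num

theorem sqrt_integral_norm_sub_sq_le {f g h : α → E} (hf : MemLp f 2 μ) (hg : MemLp g 2 μ)
    (hh : AEStronglyMeasurable h μ) :
    √(∫ x, ‖f x - h x‖ ^ 2 ∂μ) ≤ √(∫ x, ‖f x - g x‖ ^ 2 ∂μ) + √(∫ x, ‖g x - h x‖ ^ 2 ∂μ) := by
  have hfg := hf.aestronglyMeasurable.sub hg.aestronglyMeasurable
  have hfh := hf.aestronglyMeasurable.sub hh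
  have hgh := hg.aestronglyMeasurable.sub hh
  simp only [← Pi.sub_apply f, ← Pi.sub_apply g, sqrt_integral_norm_sq_eq_lpNorm hfg,
    sqrt_integral_norm_sq_eq_lpNorm hfh, sqrt_integral_norm_sq_eq_lpNorm hgh]
  exact lpNorm_sub_le_lpNorm_sub_add_lpNorm_sub hf hg one_le_two

end L2Distance

theorem procrustes_triangle_composition_general
    (M N : Set E3) (hM : IsCompact M) (hN : IsCompact N)
    (μ ν : Measure E3) [IsProbabilityMeasure μ]
    (hμM : μ Mᶜ = 0) (hνN : ν Nᶜ = 0)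
    (C : E3 → E3) (hCmeas : Measurable C) (hCmaps : Set.MapsTo C M N)
    (hpush : Measure.map C μ = ν)
    (C' : E3 → E3) (hC'meas : Measurable C') :
    (⨅ R : E3 ≃ᵃⁱ[ℝ] E3, Real.sqrt (∫ x in M, ‖R x - C' (C x)‖ ^ 2 ∂μ))
      ≤ (⨅ R : E3 ≃ᵃⁱ[ℝ] E3, Real.sqrt (∫ x in M, ‖R x - C x‖ ^ 2 ∂μ))
        + ⨅ R : E3 ≃ᵃⁱ[ℝ] E3, Real.sqrt (∫ y in N, ‖R y - C' y‖ ^ 2 ∂ν) := by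
  have haeM : ∀ᵐ x ∂μ, x ∈ M := mem_ae_iff.2 hμM
  rw [Measure.restrict_eq_self_of_ae_mem haeM,
    Measure.restrict_eq_self_of_ae_mem (mem_ae_iff.2 hνN)]
  refine le_ciInf_add_ciInf fun R₁ R₂ =>
    (ciInf_le ⟨0, Set.forall_mem_range.2 fun _ => Real.sqrt_nonneg _⟩ (R₁.trans R₂)).trans ?_
  have hR : MemLp (fun x => R₂ (R₁ x)) 2 μ :=
    .of_ae_mem_of_isBounded (hM.image (R₁.trans R₂).continuous).isBounded
      (R₁.trans R₂).continuous.aestronglyMeasurable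
      (haeM.mono fun x hx => Set.mem_image_of_mem _ hx)
  have hRC : MemLp (fun x => R₂ (C x)) 2 μ :=
    .of_ae_mem_of_isBounded (hN.image R₂.continuous).isBounded
      (R₂.continuous.measurable.comp hCmeas).aestronglyMeasurable
      (haeM.mono fun x hx => Set.mem_image_of_mem _ (hCmaps hx))
  have hisom : ∀ x, ‖R₂ (R₁ x) - R₂ (C x)‖ = ‖R₁ x - C x‖ := fun x => by
    rw [← dist_eq_norm, ← dist_eq_norm, R₂.dist_map]
  have hchange : ∫ x, ‖R₂ (C x) - C' (C x)‖ ^ 2 ∂μ = ∫ y, ‖R₂ y - C' y‖ ^ 2 ∂ν := by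
    rw [← hpush, integral_map (f := fun y => ‖R₂ y - C' y‖ ^ 2) hCmeas.aemeasurable
      ((R₂.continuous.measurable.sub hC'meas).norm.pow_const 2).aestronglyMeasurable]
  calc √(∫ x, ‖R₂ (R₁ x) - C' (C x)‖ ^ 2 ∂μ)
      ≤ √(∫ x, ‖R₂ (R₁ x) - R₂ (C x)‖ ^ 2 ∂μ) + √(∫ x, ‖R₂ (C x) - C' (C x)‖ ^ 2 ∂μ) :=
        sqrt_integral_norm_sub_sq_le hR hRC (hC'meas.comp hCmeas).aestronglyMeasurable
    _ = √(∫ x, ‖R₁ x - C x‖ ^ 2 ∂μ) + √(∫ y, ‖R₂ y - C' y‖ ^ 2 ∂ν) := by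
        simp only [hisom, hchange]

/-- Triangle inequality for the Procrustes discrepancy along a composition:
`dₚ(M,L;C'∘C) ≤ dₚ(M,N;C) + dₚ(N,L;C')`, where `C` pushes `μ` forward to `ν`. -/
theorem procrustes_triangle_composition
    (M N L : Set E3) (hM : IsCompact M) (hN : IsCompact N) (hL : IsCompact L)
    (μ ν : Measure E3) [IsProbabilityMeasure μ] [IsProbabilityMeasure ν]
    (hμM : μ Mᶜ = 0) (hνN : ν Nᶜ = 0)
    (C : E3 → E3) (hCmeas : Measurable C) (hCmaps : Set.MapsTo C M N)
    (hpush : Measure.map C μ = ν)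
    (C' : E3 → E3) (hC'meas : Measurable C') (hC'maps : Set.MapsTo C' N L) :
    (⨅ R : E3 ≃ᵃⁱ[ℝ] E3, Real.sqrt (∫ x in M, ‖R x - C' (C x)‖ ^ 2 ∂μ))
      ≤ (⨅ R : E3 ≃ᵃⁱ[ℝ] E3, Real.sqrt (∫ x in M, ‖R x - C x‖ ^ 2 ∂μ))
        + ⨅ R : E3 ≃ᵃⁱ[ℝ] E3, Real.sqrt (∫ y in N, ‖R y - C' y‖ ^ 2 ∂ν) :=
  procrustes_triangle_composition_general M N hM hN μ ν hμM hνN C hCmeas hCmaps hpush C' hC'meas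
end
end

section
/- Let M, N ⊆ ℝ³ be compact sets equipped with metrics d_M on M and d_N on N that induce the subspace topologies, and with Borel probability measures μ on M and ν on N. Fix B > 0 and let 𝔅_B(M,N) be the set of bijections C : M → N satisfying B⁻¹ d_M(x,y) ≤ d_N(C x, C y) ≤ B d_M(x,y) for all x, y ∈ M and such that the pushforward of μ under C equals ν. If 𝔅_B(M,N) is nonempty, then there exists C* ∈ 𝔅_B(M,N) attaining the infimum of C ↦ dₚ(M,N;C) over 𝔅_B(M,N). -/
open MeasureTheory

noncomputable section

local notation "E3" => EuclideanSpace ℝ (Fin 3)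

open Topology Filter

section dist_aux
variable {X : Type*} (d : X → X → ℝ)

theorem aux_nonneg (heq : ∀ x y, d x y = 0 ↔ x = y) (hsymm : ∀ x y, d x y = d y x)
    (htri : ∀ x y z, d x z ≤ d x y + d y z) (x y : X) : 0 ≤ d x y := by
  have h := htri x y x
  rw [(heq x x).mpr rfl, hsymm y x] at h
  linarith

theorem aux_ball_mem [TopologicalSpace X]
    (htop : ∀ (x : X) (s : Set X), s ∈ nhds x ↔ ∃ ε > (0:ℝ), {y | d x y < ε} ⊆ s)
    (x : X) {ε : ℝ} (hε : 0 < ε) : {y | d x y < ε} ∈ 𝓝 x :=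
  (htop x _).mpr ⟨ε, hε, subset_rfl⟩

theorem aux_continuous [TopologicalSpace X]
    (hsymm : ∀ x y, d x y = d y x) (htri : ∀ x y z, d x z ≤ d x y + d y z)
    (htop : ∀ (x : X) (s : Set X), s ∈ nhds x ↔ ∃ ε > (0:ℝ), {y | d x y < ε} ⊆ s) :
    Continuous (fun p : X × X => d p.1 p.2) := by
  rw [continuous_iff_continuousAt]
  rintro ⟨a, b⟩
  rw [ContinuousAt, Metric.tendsto_nhds]
  intro ε hε
  rw [nhds_prod_eq]
  filter_upwards [Filter.prod_mem_prod (aux_ball_mem d htop a (half_pos hε))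
    (aux_ball_mem d htop b (half_pos hε))] with p hp
  obtain ⟨h1, h2⟩ := hp
  simp only [Set.mem_setOf_eq] at h1 h2
  have t1 : d p.1 p.2 ≤ d p.1 a + d a b + d b p.2 := by
    have := htri p.1 a p.2
    have := htri a b p.2
    linarith
  have t2 : d a b ≤ d a p.1 + d p.1 p.2 + d p.2 b := by
    have := htri a p.1 b
    have := htri p.1 p.2 b
    linarith
  rw [Real.dist_eq, abs_sub_lt_iff]
  have e1 := hsymm p.2 b
  have e2 := hsymm a p.1
  have e3 := hsymm b p.2
  constructor <;> linarith

theorem aux_unif [MetricSpace X] [CompactSpace X]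
    (hcont : Continuous (fun p : X × X => d p.1 p.2))
    (heq : ∀ x y, d x y = 0 ↔ x = y)
    (hnonneg : ∀ x y, 0 ≤ d x y)
    {ε : ℝ} (hε : 0 < ε) : ∃ δ > (0:ℝ), ∀ z w : X, d z w < δ → dist z w < ε := by
  by_contra hcon
  push_neg at hcon
  have key : ∀ n : ℕ, ∃ p : X × X, d p.1 p.2 < 1/(n+1) ∧ ε ≤ dist p.1 p.2 := by
    intro n
    obtain ⟨z, w, h1, h2⟩ := hcon (1/(n+1)) (by positivity)
    exact ⟨(z, w), h1, h2⟩
  choose p hp1 hp2 using key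
  obtain ⟨q, -, φ, hφ, hq⟩ := IsCompact.tendsto_subseq (x := p)
      (isCompact_univ (X := X × X)) (fun n => Set.mem_univ _)
  have hd : Tendsto (fun n => d (p (φ n)).1 (p (φ n)).2) atTop (𝓝 (d q.1 q.2)) :=
    (hcont.tendsto q).comp hq
  have hd0 : Tendsto (fun n => d (p (φ n)).1 (p (φ n)).2) atTop (𝓝 0) := by
    apply squeeze_zero (fun n => hnonneg _ _) (fun n => le_of_lt (hp1 (φ n)))
    have h1 : Tendsto (fun n : ℕ => 1/((n:ℝ)+1)) atTop (𝓝 0) :=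
      tendsto_one_div_add_atTop_nhds_zero_nat
    exact h1.comp hφ.tendsto_atTop
  have hqq : q.1 = q.2 := (heq _ _).mp (tendsto_nhds_unique hd hd0)
  have hdist : Tendsto (fun n => dist (p (φ n)).1 (p (φ n)).2) atTop (𝓝 (dist q.1 q.2)) :=
    ((continuous_dist.comp continuous_id).tendsto q).comp hq
  have : ε ≤ dist q.1 q.2 := ge_of_tendsto hdist (Filter.Eventually.of_forall (fun n => hp2 (φ n)))
  rw [hqq, dist_self] at this
  linarith

end dist_aux

section int_aux
variable {α : Type*} [MeasurableSpace α] (μ : Measure α) [IsProbabilityMeasure μ]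

theorem aux_cs {g : α → ℝ} (hg : ∀ x, 0 ≤ g x) (hgi : Integrable g μ)
    (hgi2 : Integrable (fun x => g x ^ 2) μ) : ∫ x, g x ∂μ ≤ Real.sqrt (∫ x, g x ^ 2 ∂μ) := by
  set c := ∫ x, g x ∂μ with hc
  have hc0 : 0 ≤ c := integral_nonneg hg
  have h0 : 0 ≤ ∫ x, (g x - c) ^ 2 ∂μ := integral_nonneg (fun x => sq_nonneg _)
  have hexp : ∫ x, (g x - c) ^ 2 ∂μ = (∫ x, g x ^ 2 ∂μ) - c ^ 2 := by
    have h1 : ∀ x, (g x - c) ^ 2 = g x ^ 2 - 2 * c * g x + c ^ 2 := by intro x; ring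
    simp_rw [h1]
    have hi1 : Integrable (fun x => g x ^ 2 - 2 * c * g x) μ := hgi2.sub (hgi.const_mul _)
    rw [integral_add hi1 (integrable_const _), integral_sub hgi2 (hgi.const_mul _),
      integral_const, integral_const_mul]
    simp [← hc]
    ring
  rw [hexp] at h0
  have h2 : c ^ 2 ≤ ∫ x, g x ^ 2 ∂μ := by linarith
  have h3 := Real.sqrt_le_sqrt h2
  rwa [Real.sqrt_sq hc0] at h3

theorem aux_minkowski {f g : α → ℝ} {D : ℝ} (hD : 0 ≤ D)
    (hf : ∀ x, 0 ≤ f x) (hgpos : ∀ x, 0 ≤ g x) (hle : ∀ x, f x ≤ g x + D)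
    (hfi2 : Integrable (fun x => f x ^ 2) μ)
    (hgi : Integrable g μ) (hgi2 : Integrable (fun x => g x ^ 2) μ) :
    Real.sqrt (∫ x, f x ^ 2 ∂μ) ≤ Real.sqrt (∫ x, g x ^ 2 ∂μ) + D := by
  have hcs := aux_cs μ hgpos hgi hgi2
  have hsq : ∫ x, f x ^ 2 ∂μ ≤ (Real.sqrt (∫ x, g x ^ 2 ∂μ) + D) ^ 2 := by
    have step1 : ∫ x, f x ^ 2 ∂μ ≤ ∫ x, (g x ^ 2 + (2 * D) * g x + D ^ 2) ∂μ := by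
      have hi1 : Integrable (fun x => g x ^ 2 + 2 * D * g x + D ^ 2) μ :=
        (hgi2.add (hgi.const_mul _)).add (integrable_const _)
      apply integral_mono hfi2 hi1
      intro x
      have h1 : f x ^ 2 ≤ (g x + D) ^ 2 := by
        apply pow_le_pow_left₀ (hf x) (hle x)
      dsimp only
      nlinarith [h1]
    have step2 : ∫ x, (g x ^ 2 + (2 * D) * g x + D ^ 2) ∂μ
        = (∫ x, g x ^ 2 ∂μ) + 2 * D * (∫ x, g x ∂μ) + D ^ 2 := by
      have hi1 : Integrable (fun x => g x ^ 2 + 2 * D * g x) μ := hgi2.add (hgi.const_mul _)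
      rw [integral_add hi1 (integrable_const _), integral_add hgi2 (hgi.const_mul _),
        integral_const, integral_const_mul]
      simp
    have sqrt_sq : Real.sqrt (∫ x, g x ^ 2 ∂μ) ^ 2 = ∫ x, g x ^ 2 ∂μ :=
      Real.sq_sqrt (integral_nonneg (fun x => sq_nonneg _))
    have hs0 : 0 ≤ Real.sqrt (∫ x, g x ^ 2 ∂μ) := Real.sqrt_nonneg _
    nlinarith [step1, step2, hcs]
  calc Real.sqrt (∫ x, f x ^ 2 ∂μ) ≤ Real.sqrt ((Real.sqrt (∫ x, g x ^ 2 ∂μ) + D) ^ 2) :=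
        Real.sqrt_le_sqrt hsq
    _ = Real.sqrt (∫ x, g x ^ 2 ∂μ) + D := by
        rw [Real.sqrt_sq (by positivity)]
end int_aux

theorem aux_map_limit {α β : Type*} [TopologicalSpace α] [CompactSpace α]
    [MeasurableSpace α] [OpensMeasurableSpace α]
    [MetricSpace β] [CompactSpace β] [MeasurableSpace β] [BorelSpace β]
    (μ : Measure α) [IsProbabilityMeasure μ] (ν : Measure β) [IsFiniteMeasure ν]
    (Cp : ℕ → α → β) (hCp : ∀ k, Continuous (Cp k)) (hmap : ∀ k, Measure.map (Cp k) μ = ν)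
    (C : α → β) (hC : Continuous C)
    (hpt : ∀ x, Tendsto (fun k => Cp k x) atTop (𝓝 (C x))) :
    Measure.map C μ = ν := by
  haveI := Measure.isProbabilityMeasure_map (μ := μ) hC.measurable.aemeasurable
  apply ext_of_forall_lintegral_eq_of_IsFiniteMeasure
  intro g
  set gr : BoundedContinuousFunction β ℝ :=
    BoundedContinuousFunction.mkOfCompact ⟨fun z => (g z : ℝ), by continuity⟩ with hgr
  have hgint : ∀ (h : α → β), Continuous h → Integrable (fun x => (g (h x) : ℝ)) μ := by
    intro h hh
    exact (NNReal.continuous_coe.comp (g.continuous.comp hh)).integrable_of_hasCompactSupport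
      (HasCompactSupport.of_compactSpace _)
  have hgν : Integrable (fun z => ((g z : ℝ))) ν := gr.integrable ν
  rw [lintegral_map g.continuous.measurable.coe_nnreal_ennreal hC.measurable,
    lintegral_coe_eq_integral _ (hgint C hC), lintegral_coe_eq_integral _ hgν]
  congr 1
  have hconst : ∀ k, ∫ x, (g (Cp k x) : ℝ) ∂μ = ∫ z, (g z : ℝ) ∂ν := by
    intro k
    rw [← hmap k, integral_map (f := fun z => ((g z : ℝ))) (hCp k).aemeasurable
      ((NNReal.continuous_coe.comp g.continuous).aestronglyMeasurable)]
  have hDCT : Tendsto (fun k => ∫ x, (g (Cp k x) : ℝ) ∂μ) atTop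
      (𝓝 (∫ x, (g (C x) : ℝ) ∂μ)) := by
    apply tendsto_integral_of_dominated_convergence (bound := fun _ => ‖gr‖)
    · exact fun k =>
        (NNReal.continuous_coe.comp (g.continuous.comp (hCp k))).aestronglyMeasurable
    · exact integrable_const _
    · intro k
      apply Filter.Eventually.of_forall
      intro x
      exact gr.norm_coe_le_norm (Cp k x)
    · apply Filter.Eventually.of_forall
      intro x
      exact ((NNReal.continuous_coe.comp g.continuous).tendsto (C x)).comp (hpt x)
  simp_rw [hconst] at hDCT
  exact tendsto_nhds_unique hDCT tendsto_const_nhds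

theorem aux_flip (M : Set E3) (hM : IsCompact M) (μ : Measure M) [IsProbabilityMeasure μ]
    (C C' : M → E3) (hC : Continuous C) (hC' : Continuous C') {D : ℝ} (hD : 0 ≤ D)
    (hdist : ∀ x, ‖C x - C' x‖ ≤ D) :
    (⨅ R : E3 ≃ᵃⁱ[ℝ] E3, Real.sqrt (∫ x, ‖R (x : E3) - C x‖ ^ 2 ∂μ)) ≤
      (⨅ R : E3 ≃ᵃⁱ[ℝ] E3, Real.sqrt (∫ x, ‖R (x : E3) - C' x‖ ^ 2 ∂μ)) + D := by
  haveI : CompactSpace M := isCompact_iff_compactSpace.mp hM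
  haveI : Nonempty (E3 ≃ᵃⁱ[ℝ] E3) := ⟨AffineIsometryEquiv.refl ℝ E3⟩
  have hint : ∀ (h : M → E3), Continuous h → ∀ (R : E3 ≃ᵃⁱ[ℝ] E3),
      Integrable (fun x : M => ‖R (x : E3) - h x‖) μ ∧
      Integrable (fun x : M => ‖R (x : E3) - h x‖ ^ 2) μ := by
    intro h hh R
    have hcont : Continuous (fun x : M => ‖R (x : E3) - h x‖) :=
      ((R.continuous.comp continuous_subtype_val).sub hh).norm
    exact ⟨hcont.integrable_of_hasCompactSupport (HasCompactSupport.of_compactSpace _),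
      (hcont.pow 2).integrable_of_hasCompactSupport (HasCompactSupport.of_compactSpace _)⟩
  have hAB : ∀ R : E3 ≃ᵃⁱ[ℝ] E3,
      Real.sqrt (∫ x, ‖R (x : E3) - C x‖ ^ 2 ∂μ) ≤
        Real.sqrt (∫ x, ‖R (x : E3) - C' x‖ ^ 2 ∂μ) + D := by
    intro R
    apply aux_minkowski μ hD (fun x => norm_nonneg _) (fun x => norm_nonneg _) ?_
      (hint C hC R).2 (hint C' hC' R).1 (hint C' hC' R).2
    intro x
    calc ‖R (x : E3) - C x‖ ≤ ‖R (x : E3) - C' x‖ + ‖C' x - C x‖ :=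
          norm_sub_le_norm_sub_add_norm_sub _ _ _
      _ ≤ ‖R (x : E3) - C' x‖ + D := by
          have := hdist x
          rw [norm_sub_rev] at this
          linarith
  have hbdd : BddBelow (Set.range fun R : E3 ≃ᵃⁱ[ℝ] E3 =>
      Real.sqrt (∫ x, ‖R (x : E3) - C x‖ ^ 2 ∂μ)) := by
    refine ⟨0, ?_⟩
    rintro _ ⟨R, rfl⟩
    positivity
  have h1 : ∀ R : E3 ≃ᵃⁱ[ℝ] E3,
      (⨅ R' : E3 ≃ᵃⁱ[ℝ] E3, Real.sqrt (∫ x, ‖R' (x : E3) - C x‖ ^ 2 ∂μ)) - D ≤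
        Real.sqrt (∫ x, ‖R (x : E3) - C' x‖ ^ 2 ∂μ) := by
    intro R
    have := (ciInf_le hbdd R).trans (hAB R)
    linarith
  have h2 := le_ciInf h1
  linarith


/-- Let `M, N ⊆ ℝ³` be compact, equipped with metrics `dM, dN` inducing the
subspace topologies, and with Borel probability measures `μ, ν`. For `B > 0`, if the set
`𝔅_B(M,N)` of `B`-bi-Lipschitz measure-preserving bijections `C : M → N` is nonempty, then
the Procrustes functional `C ↦ dₚ(M,N;C)` attains its infimum on `𝔅_B(M,N)`. -/
theorem exists_min_biLipschitz
    (M N : Set E3) (hM : IsCompact M) (hN : IsCompact N)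
    (μ : Measure M) [IsProbabilityMeasure μ] (ν : Measure N) [IsProbabilityMeasure ν]
    (dM : M → M → ℝ) (dN : N → N → ℝ)
    (hdM_eq : ∀ x y, dM x y = 0 ↔ x = y)
    (hdM_symm : ∀ x y, dM x y = dM y x)
    (hdM_tri : ∀ x y z, dM x z ≤ dM x y + dM y z)
    (hdM_top : ∀ (x : M) (s : Set M), s ∈ nhds x ↔ ∃ ε > (0:ℝ), {y | dM x y < ε} ⊆ s)
    (hdN_eq : ∀ x y, dN x y = 0 ↔ x = y)
    (hdN_symm : ∀ x y, dN x y = dN y x)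
    (hdN_tri : ∀ x y z, dN x z ≤ dN x y + dN y z)
    (hdN_top : ∀ (x : N) (s : Set N), s ∈ nhds x ↔ ∃ ε > (0:ℝ), {y | dN x y < ε} ⊆ s)
    (B : ℝ) (hB : 0 < B)
    (𝔅 : Set (M → N))
    (h𝔅 : 𝔅 = {C | Function.Bijective C ∧
        (∀ x y, B⁻¹ * dM x y ≤ dN (C x) (C y) ∧ dN (C x) (C y) ≤ B * dM x y) ∧
        Measure.map C μ = ν})
    (hne : 𝔅.Nonempty) :
    ∃ Cstar ∈ 𝔅, ∀ C ∈ 𝔅,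
      (⨅ R : E3 ≃ᵃⁱ[ℝ] E3, Real.sqrt (∫ x, ‖R (x : E3) - (Cstar x : E3)‖ ^ 2 ∂μ))
        ≤ ⨅ R : E3 ≃ᵃⁱ[ℝ] E3, Real.sqrt (∫ x, ‖R (x : E3) - (C x : E3)‖ ^ 2 ∂μ) := by
  haveI hMc : CompactSpace M := isCompact_iff_compactSpace.mp hM
  haveI hNc : CompactSpace N := isCompact_iff_compactSpace.mp hN
  haveI : Nonempty (E3 ≃ᵃⁱ[ℝ] E3) := ⟨AffineIsometryEquiv.refl ℝ E3⟩
  have hdM_nonneg := aux_nonneg dM hdM_eq hdM_symm hdM_tri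
  have hdN_nonneg := aux_nonneg dN hdN_eq hdN_symm hdN_tri
  have hdMc := aux_continuous dM hdM_symm hdM_tri hdM_top
  have hdNc := aux_continuous dN hdN_symm hdN_tri hdN_top
  have hmem : ∀ C ∈ 𝔅, Function.Bijective C ∧
      (∀ x y, B⁻¹ * dM x y ≤ dN (C x) (C y) ∧ dN (C x) (C y) ≤ B * dM x y) ∧
      Measure.map C μ = ν := by
    intro C hC; rw [h𝔅] at hC; exact hC
  have hcont : ∀ C ∈ 𝔅, Continuous C := by
    intro C hC
    obtain ⟨-, hb, -⟩ := hmem C hC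
    rw [continuous_iff_continuousAt]
    intro x s hs
    rw [Filter.mem_map]
    obtain ⟨ε, hε, hsub⟩ := (hdN_top (C x) s).mp hs
    refine Filter.mem_of_superset (aux_ball_mem dM hdM_top x (div_pos hε hB)) ?_
    intro y hy
    apply hsub
    have h1 : dN (C x) (C y) ≤ B * dM x y := (hb x y).2
    have h2 : B * dM x y < B * (ε / B) := (mul_lt_mul_iff_right₀ hB).mpr hy
    have h3 : B * (ε / B) = ε := by field_simp
    show dN (C x) (C y) < ε
    linarith
  set F : (M → N) → ℝ :=
    fun C => ⨅ R : E3 ≃ᵃⁱ[ℝ] E3, Real.sqrt (∫ x, ‖R (x : E3) - (C x : E3)‖ ^ 2 ∂μ) with hF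
  have hFnonneg : ∀ C, 0 ≤ F C := fun C => Real.iInf_nonneg (fun R => Real.sqrt_nonneg _)
  set S : Set ℝ := F '' 𝔅 with hS
  have hSne : S.Nonempty := hne.image F
  have hSbdd : BddBelow S := ⟨0, by rintro _ ⟨C, -, rfl⟩; exact hFnonneg C⟩
  set m : ℝ := sInf S with hm
  have hseq : ∀ n : ℕ, ∃ C ∈ 𝔅, F C < m + 1/(n+1) := by
    intro n
    obtain ⟨a, ⟨C, hC, rfl⟩, ha⟩ := Real.lt_sInf_add_pos hSne (ε := 1/(n+1)) (by positivity)
    exact ⟨C, hC, ha⟩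
  choose Cn hCn hFCn using hseq
  set fn : ℕ → BoundedContinuousFunction M N :=
    fun n => BoundedContinuousFunction.mkOfCompact ⟨Cn n, hcont _ (hCn n)⟩ with hfn
  have hfncoe : ∀ n, ⇑(fn n) = Cn n := fun n => rfl
  set A : Set (BoundedContinuousFunction M N) := {h | ⇑h ∈ 𝔅} with hA
  have hfnA : ∀ n, fn n ∈ A := by
    intro n; show ⇑(fn n) ∈ 𝔅; rw [hfncoe]; exact hCn n
  have hequi : Equicontinuous ((↑) : A → M → N) := by
    intro x
    rw [Metric.equicontinuousAt_iff]
    intro ε hε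
    obtain ⟨δ, hδ, hδ'⟩ := aux_unif dN hdNc hdN_eq hdN_nonneg hε
    have hball : {y : M | dM x y < δ / B} ∈ 𝓝 x := aux_ball_mem dM hdM_top x (div_pos hδ hB)
    obtain ⟨r, hr, hrsub⟩ := Metric.mem_nhds_iff.mp hball
    refine ⟨r, hr, ?_⟩
    intro y hy i
    have hyb : dM x y < δ / B := hrsub (Metric.mem_ball.mpr hy)
    obtain ⟨-, hb, -⟩ := hmem _ i.2
    have h1 : dN ((i : M → N) x) ((i : M → N) y) ≤ B * dM x y := (hb x y).2
    have h3 : B * (δ / B) = δ := by field_simp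
    have h2 : B * dM x y < δ := by
      have := (mul_lt_mul_iff_right₀ hB).mpr hyb
      linarith
    exact hδ' _ _ (lt_of_le_of_lt h1 h2)
  have hclos : IsCompact (closure A) :=
    BoundedContinuousFunction.arzela_ascoli Set.univ isCompact_univ A
      (fun f x _ => Set.mem_univ _) hequi
  obtain ⟨f, -, φ, hφ, hq⟩ := hclos.tendsto_subseq (fun n => subset_closure (hfnA n))
  have hdist0 : Tendsto (fun k => dist (fn (φ k)) f) atTop (𝓝 0) :=
    tendsto_iff_dist_tendsto_zero.mp hq
  have hpt : ∀ x : M, Tendsto (fun k => (fn (φ k)) x) atTop (𝓝 (f x)) := by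
    intro x
    rw [tendsto_iff_dist_tendsto_zero]
    exact squeeze_zero (fun k => dist_nonneg)
      (fun k => BoundedContinuousFunction.dist_coe_le_dist x) hdist0
  have hdNlim : ∀ x y : M, Tendsto (fun k => dN ((fn (φ k)) x) ((fn (φ k)) y)) atTop
      (𝓝 (dN (f x) (f y))) := by
    intro x y
    exact (hdNc.tendsto (f x, f y)).comp ((hpt x).prodMk_nhds (hpt y))
  have hfb : ∀ x y, B⁻¹ * dM x y ≤ dN (f x) (f y) ∧ dN (f x) (f y) ≤ B * dM x y := by
    intro x y
    constructor
    · exact ge_of_tendsto (hdNlim x y) (Eventually.of_forall fun k =>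
        ((hmem _ (hCn (φ k))).2.1 x y).1)
    · exact le_of_tendsto (hdNlim x y) (Eventually.of_forall fun k =>
        ((hmem _ (hCn (φ k))).2.1 x y).2)
  have hinj : Function.Injective ⇑f := by
    intro x y hxy
    by_contra hne'
    have hd : 0 < dM x y :=
      lt_of_le_of_ne (hdM_nonneg x y) (fun h => hne' ((hdM_eq x y).mp h.symm))
    have h1 := (hfb x y).1
    rw [hxy, (hdN_eq (f y) (f y)).mpr rfl] at h1
    nlinarith [inv_pos.mpr hB]
  have hsurj : Function.Surjective ⇑f := by
    intro y
    have hex : ∀ k, ∃ x, (fn (φ k)) x = y := fun k => ((hmem _ (hCn (φ k))).1.2) y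
    choose xs hxs using hex
    obtain ⟨x, -, ψ, hψ, hx⟩ :=
      (isCompact_univ (X := M)).tendsto_subseq (fun k => Set.mem_univ (xs k))
    refine ⟨x, ?_⟩
    have hA1 : Tendsto (fun j => dist ((fn (φ (ψ j))) x) (f x)) atTop (𝓝 0) :=
      tendsto_iff_dist_tendsto_zero.mp ((hpt x).comp hψ.tendsto_atTop)
    have key : ∀ ε > (0:ℝ), dist (f x) y < ε := by
      intro ε hε
      obtain ⟨δ, hδ, hδ'⟩ := aux_unif dN hdNc hdN_eq hdN_nonneg (half_pos hε)
      have hdM0 : Tendsto (fun j => dM x (xs (ψ j))) atTop (𝓝 0) := by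
        have h1 : Tendsto (fun j => ((x : M), xs (ψ j))) atTop (𝓝 (x, x)) :=
          tendsto_const_nhds.prodMk_nhds hx
        have h2 := (hdMc.tendsto (x, x)).comp h1
        rwa [(hdM_eq x x).mpr rfl] at h2
      have he1 : ∀ᶠ j in atTop, dist ((fn (φ (ψ j))) x) (f x) < ε/2 :=
        hA1.eventually_lt_const (half_pos hε)
      have he2 : ∀ᶠ j in atTop, dM x (xs (ψ j)) < δ/B :=
        hdM0.eventually_lt_const (div_pos hδ hB)
      obtain ⟨j, hj1, hj2⟩ := (he1.and he2).exists
      have hb := ((hmem _ (hCn (φ (ψ j)))).2.1 x (xs (ψ j))).2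
      have h3 : B * (δ / B) = δ := by field_simp
      have hlt : dN ((fn (φ (ψ j))) x) ((fn (φ (ψ j))) (xs (ψ j))) < δ := by
        have h4 := (mul_lt_mul_iff_right₀ hB).mpr hj2
        calc dN ((fn (φ (ψ j))) x) ((fn (φ (ψ j))) (xs (ψ j))) ≤ B * dM x (xs (ψ j)) := hb
          _ < δ := by linarith
      have h5 := hδ' _ _ hlt
      have h6 : (fn (φ (ψ j))) (xs (ψ j)) = y := hxs (ψ j)
      have h7 : dist (f x) y ≤ dist (f x) ((fn (φ (ψ j))) x)
          + dist ((fn (φ (ψ j))) x) y := dist_triangle _ _ _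
      rw [← h6] at h7
      rw [dist_comm] at hj1
      have h8 : dist (f x) ((fn (φ (ψ j))) (xs (ψ j))) < ε := by
        calc dist (f x) ((fn (φ (ψ j))) (xs (ψ j)))
            ≤ dist (f x) ((fn (φ (ψ j))) x)
              + dist ((fn (φ (ψ j))) x) ((fn (φ (ψ j))) (xs (ψ j))) := dist_triangle _ _ _
          _ < ε/2 + ε/2 := by exact add_lt_add hj1 h5
          _ = ε := by ring
      rwa [h6] at h8
    have h0 : ¬ (0 < dist (f x) y) := fun h => lt_irrefl _ (key _ h)
    exact dist_le_zero.mp (not_lt.mp h0)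
  have hfmap : Measure.map ⇑f μ = ν :=
    aux_map_limit μ ν (fun k => ⇑(fn (φ k))) (fun k => (fn (φ k)).continuous)
      (fun k => (hmem _ (hCn (φ k))).2.2) ⇑f f.continuous hpt
  have hf𝔅 : ⇑f ∈ 𝔅 := by rw [h𝔅]; exact ⟨⟨hinj, hsurj⟩, hfb, hfmap⟩
  have hFf : F ⇑f ≤ m := by
    have hbound : ∀ k, F ⇑f ≤ m + 1/((φ k : ℝ)+1) + dist (fn (φ k)) f := by
      intro k
      have hD : (0:ℝ) ≤ dist (fn (φ k)) f := dist_nonneg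
      have hdd : ∀ x : M, ‖((f x : E3)) - (((fn (φ k)) x : E3))‖ ≤ dist (fn (φ k)) f := by
        intro x
        rw [← dist_eq_norm]
        have h1 : dist ((fn (φ k)) x) (f x) ≤ dist (fn (φ k)) f :=
          BoundedContinuousFunction.dist_coe_le_dist x
        rw [Subtype.dist_eq] at h1
        rw [dist_comm] at h1
        exact h1
      have hflip := aux_flip M hM μ (fun x => ((f x : E3))) (fun x => (((fn (φ k)) x : E3)))
        (continuous_subtype_val.comp f.continuous)
        (continuous_subtype_val.comp (fn (φ k)).continuous) hD hdd
      have hstep : F ⇑f ≤ F ⇑(fn (φ k)) + dist (fn (φ k)) f := hflip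
      have h2 : F (Cn (φ k)) < m + 1/((φ k : ℝ)+1) := hFCn (φ k)
      rw [← hfncoe (φ k)] at h2
      linarith
    have htend : Tendsto (fun k => m + 1/((φ k : ℝ)+1) + dist (fn (φ k)) f) atTop
        (𝓝 (m + 0 + 0)) := by
      refine Tendsto.add (Tendsto.add tendsto_const_nhds ?_) hdist0
      exact tendsto_one_div_add_atTop_nhds_zero_nat.comp hφ.tendsto_atTop
    have h9 := ge_of_tendsto htend (Eventually.of_forall hbound)
    simpa using h9
  refine ⟨⇑f, hf𝔅, ?_⟩
  intro C hC
  have h1 : m ≤ F C := csInf_le hSbdd ⟨C, hC, rfl⟩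
  exact le_trans hFf h1
end
end

section
/- Let (X, d) be a compact nonempty metric space with a Borel measure μ, and let Γ, ρ, λ, ε > 0 be constants such that μ(closed ball of radius r around u) ≥ Γ r² for every u ∈ X and every 0 < r ≤ ρ. Let q : X → ℝ be a nonnegative function that is Lipschitz with constant λ with respect to d, and suppose ∫_X q² dμ ≤ ε². If ε ≤ Γ^{1/2} λ ρ², then sup_{x ∈ X} q(x) ≤ 2 λ^{1/2} Γ^{-1/4} ε^{1/2}. -/
/-!
On the closed ball of radius `r` around `x`, a `λ`-Lipschitz `q` stays above `q x - λ r`, so the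
ball alone contributes at least `(q x - λ r)² Γ r²` to `∫ q²`. If `q x > 2 λ r` this exceeds
`(λ r)² Γ r²`, which is `ε²` for the radius `r = λ^{-1/2} Γ^{-1/4} ε^{1/2}`; the smallness
assumption on `ε` is exactly `r ≤ ρ`.
-/

open MeasureTheory Metric

section LipschitzLowerBound

variable {X : Type*} [PseudoMetricSpace X] [MeasurableSpace X] [OpensMeasurableSpace X]
  {μ : Measure X} {q : X → ℝ} {lam : ℝ}

theorem ofReal_sq_mul_measure_closedBall_le_lintegral_sq (hlam : 0 ≤ lam)
    (hqlip : ∀ x y, |q x - q y| ≤ lam * dist x y) {x : X} {r : ℝ} (hqx : lam * r ≤ q x) :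
    ENNReal.ofReal ((q x - lam * r) ^ 2) * μ (closedBall x r) ≤
      ∫⁻ y, ENNReal.ofReal (q y ^ 2) ∂μ := by
  have hlow : ∀ y ∈ closedBall x r, q x - lam * r ≤ q y := fun y hy => by
    have hdist : lam * dist x y ≤ lam * r :=
      mul_le_mul_of_nonneg_left (dist_comm x y ▸ mem_closedBall.mp hy) hlam
    linarith [(abs_le.mp (hqlip x y)).2]
  calc ENNReal.ofReal ((q x - lam * r) ^ 2) * μ (closedBall x r)
      = ∫⁻ _ in closedBall x r, ENNReal.ofReal ((q x - lam * r) ^ 2) ∂μ :=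
        (setLIntegral_const _ _).symm
    _ ≤ ∫⁻ y in closedBall x r, ENNReal.ofReal (q y ^ 2) ∂μ :=
        setLIntegral_mono' measurableSet_closedBall fun y hy =>
          ENNReal.ofReal_le_ofReal (pow_le_pow_left₀ (sub_nonneg.mpr hqx) (hlow y hy) 2)
    _ ≤ ∫⁻ y, ENNReal.ofReal (q y ^ 2) ∂μ := setLIntegral_le_lintegral _ _

theorem le_two_mul_of_lintegral_sq_le (hlam : 0 ≤ lam)
    (hqlip : ∀ x y, |q x - q y| ≤ lam * dist x y) {x : X} {r c ε : ℝ} (hr : 0 ≤ r)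
    (hc : 0 < c) (hball : ENNReal.ofReal c ≤ μ (closedBall x r))
    (hint : ∫⁻ y, ENNReal.ofReal (q y ^ 2) ∂μ ≤ ENNReal.ofReal (ε ^ 2))
    (hε : ε ^ 2 ≤ c * (lam * r) ^ 2) :
    q x ≤ 2 * (lam * r) := by
  by_contra! hqx
  have hlr : 0 ≤ lam * r := mul_nonneg hlam hr
  have hmass : ENNReal.ofReal ((q x - lam * r) ^ 2 * c) ≤ ENNReal.ofReal (ε ^ 2) := by
    rw [ENNReal.ofReal_mul (sq_nonneg _)]
    calc ENNReal.ofReal ((q x - lam * r) ^ 2) * ENNReal.ofReal c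
        ≤ ENNReal.ofReal ((q x - lam * r) ^ 2) * μ (closedBall x r) := by gcongr
      _ ≤ ENNReal.ofReal (ε ^ 2) :=
        (ofReal_sq_mul_measure_closedBall_le_lintegral_sq hlam hqlip (by linarith)).trans hint
  have hmass_real := (ENNReal.ofReal_le_ofReal_iff (sq_nonneg ε)).mp hmass
  have hsq : (lam * r) ^ 2 < (q x - lam * r) ^ 2 :=
    pow_lt_pow_left₀ (by linarith) hlr two_ne_zero
  nlinarith [mul_lt_mul_of_pos_right hsq hc]

end LipschitzLowerBound

theorem sup_bound_from_L2_bound_general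
    (X : Type*) [MetricSpace X]
    [MeasurableSpace X] [BorelSpace X] (μ : Measure X)
    (Γ ρ lam ε : ℝ) (hΓ : 0 < Γ) (hρ : 0 < ρ) (hlam : 0 < lam) (hε : 0 < ε)
    (hball : ∀ (u : X) (r : ℝ), 0 < r → r ≤ ρ →
      ENNReal.ofReal (Γ * r ^ 2) ≤ μ (Metric.closedBall u r))
    (q : X → ℝ)
    (hqlip : ∀ x y, |q x - q y| ≤ lam * dist x y)
    (hint : (∫⁻ x, ENNReal.ofReal (q x ^ 2) ∂μ) ≤ ENNReal.ofReal (ε ^ 2))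
    (hεsmall : ε ≤ Γ ^ ((1:ℝ)/2) * lam * ρ ^ 2) :
    ∀ x, q x ≤ 2 * lam ^ ((1:ℝ)/2) * Γ ^ (-(1:ℝ)/4) * ε ^ ((1:ℝ)/2) := by
  intro x
  set t := lam ^ ((1:ℝ)/2) * Γ ^ (-(1:ℝ)/4) * ε ^ ((1:ℝ)/2)
  have ht4 : Γ * t ^ 4 = lam ^ 2 * ε ^ 2 := by
    simp only [t, mul_pow, ← Real.rpow_mul_natCast hlam.le, ← Real.rpow_mul_natCast hΓ.le,
      ← Real.rpow_mul_natCast hε.le]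
    norm_num [Real.rpow_neg_one]
    field_simp
  have hε2 : ε ^ 2 ≤ Γ * lam ^ 2 * ρ ^ 4 := by
    have hΓ2 : (Γ ^ ((1:ℝ)/2)) ^ 2 = Γ := by rw [← Real.rpow_mul_natCast hΓ.le]; norm_num
    calc ε ^ 2 ≤ (Γ ^ ((1:ℝ)/2) * lam * ρ ^ 2) ^ 2 := pow_le_pow_left₀ hε.le hεsmall 2
      _ = Γ * lam ^ 2 * ρ ^ 4 := by rw [mul_pow, mul_pow, hΓ2]; ring
  have hr : 0 < t / lam := by positivity
  have hrρ : t / lam ≤ ρ := by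
    rw [← pow_le_pow_iff_left₀ hr.le hρ.le four_ne_zero, div_pow, div_le_iff₀ (by positivity)]
    nlinarith
  have hbound := le_two_mul_of_lintegral_sq_le hlam.le hqlip hr.le (by positivity)
    (hball x _ hr hrρ) hint (le_of_eq (by field_simp; linear_combination -ht4))
  calc q x ≤ 2 * (lam * (t / lam)) := hbound
    _ = 2 * lam ^ ((1:ℝ)/2) * Γ ^ (-(1:ℝ)/4) * ε ^ ((1:ℝ)/2) := by
      rw [mul_div_cancel₀ _ hlam.ne']; ring

/-- Uniform bound from an `L²` bound. On a compact metric space whose Borel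
measure satisfies `μ(B̄(u,r)) ≥ Γ r²` for `0 < r ≤ ρ`, any nonnegative `λ`-Lipschitz
function `q` with `∫ q² dμ ≤ ε²` satisfies `sup q ≤ 2 λ^{1/2} Γ^{-1/4} ε^{1/2}`, provided
`ε ≤ Γ^{1/2} λ ρ²`. -/
theorem sup_bound_from_L2_bound
    (X : Type*) [MetricSpace X] [CompactSpace X] [Nonempty X]
    [MeasurableSpace X] [BorelSpace X] (μ : Measure X)
    (Γ ρ lam ε : ℝ) (hΓ : 0 < Γ) (hρ : 0 < ρ) (hlam : 0 < lam) (hε : 0 < ε)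
    (hball : ∀ (u : X) (r : ℝ), 0 < r → r ≤ ρ →
      ENNReal.ofReal (Γ * r ^ 2) ≤ μ (Metric.closedBall u r))
    (q : X → ℝ) (hq0 : ∀ x, 0 ≤ q x)
    (hqlip : ∀ x y, |q x - q y| ≤ lam * dist x y)
    (hint : (∫⁻ x, ENNReal.ofReal (q x ^ 2) ∂μ) ≤ ENNReal.ofReal (ε ^ 2))
    (hεsmall : ε ≤ Γ ^ ((1:ℝ)/2) * lam * ρ ^ 2) :
    ∀ x, q x ≤ 2 * lam ^ ((1:ℝ)/2) * Γ ^ (-(1:ℝ)/4) * ε ^ ((1:ℝ)/2) :=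
  sup_bound_from_L2_bound_general X μ Γ ρ lam ε hΓ hρ hlam hε hball q hqlip hint hεsmall
end

section
/- Let μ, ν : ℝ² → ℝ be continuously differentiable functions such that t·ν(z) + (1−t)·μ(z) > 0 for all t ∈ [0,1] and all z ∈ ℝ². Let v : ℝ² → ℝ² be continuously differentiable with div v(z) = μ(z) − ν(z) for all z, and define v_t(z) := v(z) / (t·ν(z) + (1−t)·μ(z)). Suppose Φ : [0,1] × ℝ² → ℝ² is twice continuously differentiable, with Φ(0, z) = z and ∂_t Φ(t, z) = v_t(Φ(t, z)) for all t ∈ [0,1] and z ∈ ℝ². Then for every z ∈ ℝ², det(D_z Φ(1, z)) · ν(Φ(1, z)) = μ(z); that is, the time-1 flow map φ = Φ(1, ·) pushes the measure μ(z) dz forward to ν(w) dw. -/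
open MeasureTheory Set

noncomputable section

local notation "E2" => EuclideanSpace ℝ (Fin 2)

/-!
Fix `z` and write `φ t = Φ (t, z)`, `A t = D_z Φ (t, z)`, `ρ_t = t ν + (1 - t) μ` and
`v_t = v / ρ_t`. Since mixed partials of `Φ` commute, `A' = Dv_t(φ) ∘ A`, so by Jacobi's formula
`(det A)' = div v_t(φ) · det A`. From `ρ_t v_t = v` we get `div v = ρ_t div v_t + Dρ_t(v_t)`,
while `d/dt ρ_t(φ) = ν - μ + Dρ_t(v_t)(φ)`; as `div v = μ - ν`, the product `det A(t) · ρ_t(φ t)`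
has zero derivative on `[0, 1]`. At `t = 0` it equals `μ z`, at `t = 1` it is
`det DΦ(1, z) · ν(Φ(1, z))`.
-/

section Jacobi

variable {𝕜 : Type*} [NontriviallyNormedField 𝕜] {s : Set 𝕜} {t : 𝕜}

theorem Matrix.hasDerivWithinAt_det_fin_two {M : 𝕜 → Matrix (Fin 2) (Fin 2) 𝕜}
    {N : Matrix (Fin 2) (Fin 2) 𝕜}
    (hM : ∀ i j, HasDerivWithinAt (fun τ => M τ i j) ((N * M t) i j) s t) :
    HasDerivWithinAt (fun τ => (M τ).det) (N.trace * (M t).det) s t := by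
  simp only [Matrix.det_fin_two]
  refine (((hM 0 0).mul (hM 1 1)).sub ((hM 0 1).mul (hM 1 0))).congr_deriv ?_
  simp only [Matrix.mul_apply, Fin.sum_univ_two, Matrix.trace_fin_two]
  ring

variable [CompleteSpace 𝕜] {E : Type*} [NormedAddCommGroup E] [NormedSpace 𝕜 E]
  [FiniteDimensional 𝕜 E]

theorem hasDerivWithinAt_det_of_finrank_eq_two (hE : Module.finrank 𝕜 E = 2)
    {A : 𝕜 → E →L[𝕜] E} {B : E →L[𝕜] E} (hA : HasDerivWithinAt A (B ∘L A t) s t) :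
    HasDerivWithinAt (fun τ => LinearMap.det (A τ : E →ₗ[𝕜] E))
      (LinearMap.trace 𝕜 E B * LinearMap.det (A t : E →ₗ[𝕜] E)) s t := by
  let b := Module.finBasisOfFinrankEq 𝕜 E hE
  simp only [← LinearMap.det_toMatrix b, LinearMap.trace_eq_matrix_trace 𝕜 b]
  refine Matrix.hasDerivWithinAt_det_fin_two fun i j => ?_
  rw [← LinearMap.toMatrix_comp]
  simp only [LinearMap.toMatrix_apply]
  have hAj : HasDerivWithinAt (fun τ => A τ (b j)) (B (A t (b j))) s t := by
    simpa using hA.clm_apply (hasDerivWithinAt_const t s (b j))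
  exact (LinearMap.toContinuousLinearMap (b.coord i)).hasFDerivAt.comp_hasDerivWithinAt t hAj

end Jacobi

section Flow

variable {𝕜 : Type*} [RCLike 𝕜] {E F : Type*} [NormedAddCommGroup E] [NormedSpace 𝕜 E]
  [NormedAddCommGroup F] [NormedSpace 𝕜 F]

theorem ContDiff.hasDerivAt_fderiv_comm {Φ : 𝕜 × E → F} (hΦ : ContDiff 𝕜 2 Φ)
    (t : 𝕜) (z : E) :
    HasDerivAt (fun τ => fderiv 𝕜 (fun ζ => Φ (τ, ζ)) z)
      (fderiv 𝕜 (fun ζ => fderiv 𝕜 Φ (t, ζ) (1, 0)) z) t := by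
  have hΦ1 : Differentiable 𝕜 Φ := hΦ.differentiable (by norm_num)
  have hΦ2 : Differentiable 𝕜 (fderiv 𝕜 Φ) :=
    (hΦ.fderiv_right (m := 1) le_rfl).differentiable one_ne_zero
  have hslice : ∀ τ,
      fderiv 𝕜 (fun ζ => Φ (τ, ζ)) z = fderiv 𝕜 Φ (τ, z) ∘L .inr 𝕜 𝕜 E := fun τ =>
    ((hΦ1 _).hasFDerivAt.comp z (hasFDerivAt_prodMk_right τ z)).fderiv
  have htime :
      HasDerivAt (fun τ => fderiv 𝕜 Φ (τ, z)) (fderiv 𝕜 (fderiv 𝕜 Φ) (t, z) (1, 0)) t :=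
    (hΦ2 _).hasFDerivAt.comp_hasDerivAt_of_eq t
      ((hasDerivAt_id t).prodMk (hasDerivAt_const t z)) rfl
  have hspace : fderiv 𝕜 (fun ζ => fderiv 𝕜 Φ (t, ζ) (1, 0)) z =
      (fderiv 𝕜 (fderiv 𝕜 Φ) (t, z) ∘L .inr 𝕜 𝕜 E).flip (1, 0) := by
    simpa using (((hΦ2 _).hasFDerivAt.comp z (hasFDerivAt_prodMk_right t z)).clm_apply
      (hasFDerivAt_const _ z)).fderiv
  simp_rw [hslice, hspace]
  refine (htime.clm_comp (hasDerivAt_const t _)).congr_deriv ?_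
  ext w
  simpa using second_derivative_symmetric (fun y => (hΦ1 y).hasFDerivAt) (hΦ2 _).hasFDerivAt
    (1, 0) (0, w)

theorem hasDerivAt_fderiv_flow {Φ : 𝕜 × E → E} (hΦ : ContDiff 𝕜 2 Φ) {g : E → E}
    {s : Set 𝕜} {t : 𝕜} (hs : UniqueDiffWithinAt 𝕜 s t)
    (hflow : ∀ ζ, HasDerivWithinAt (fun τ => Φ (τ, ζ)) (g (Φ (t, ζ))) s t) {z : E}
    (hg : DifferentiableAt 𝕜 g (Φ (t, z))) :
    HasDerivAt (fun τ => fderiv 𝕜 (fun ζ => Φ (τ, ζ)) z)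
      (fderiv 𝕜 g (Φ (t, z)) ∘L fderiv 𝕜 (fun ζ => Φ (t, ζ)) z) t := by
  have hΦ1 : Differentiable 𝕜 Φ := hΦ.differentiable (by norm_num)
  have hpartial : ∀ ζ, fderiv 𝕜 Φ (t, ζ) (1, 0) = g (Φ (t, ζ)) := fun ζ => by
    have htime := (hΦ1 _).hasFDerivAt.comp_hasDerivAt_of_eq t
      ((hasDerivAt_id t).prodMk (hasDerivAt_const t ζ)) rfl
    exact (htime.hasDerivWithinAt.derivWithin hs).symm.trans ((hflow ζ).derivWithin hs)
  have hcomm := hΦ.hasDerivAt_fderiv_comm t z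
  have hslice : DifferentiableAt 𝕜 (fun ζ => Φ (t, ζ)) z :=
    (hΦ1 _).comp z (hasFDerivAt_prodMk_right t z).differentiableAt
  rwa [funext hpartial, fderiv_fun_comp z hg hslice] at hcomm

end Flow

theorem trace_fderiv_smul {𝕜 : Type*} [NontriviallyNormedField 𝕜] {E : Type*}
    [NormedAddCommGroup E] [NormedSpace 𝕜 E] [FiniteDimensional 𝕜 E] {f : E → 𝕜}
    {v : E → E} {x : E} (hf : DifferentiableAt 𝕜 f x) (hv : DifferentiableAt 𝕜 v x) :
    LinearMap.trace 𝕜 E (fderiv 𝕜 (fun y => f y • v y) x : E →ₗ[𝕜] E) =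
      f x * LinearMap.trace 𝕜 E (fderiv 𝕜 v x : E →ₗ[𝕜] E) + fderiv 𝕜 f x (v x) := by
  rw [fderiv_fun_smul hf hv]
  simp

theorem eq_of_hasDerivWithinAt_zero_Icc {F : Type*} [NormedAddCommGroup F] [NormedSpace ℝ F]
    {f : ℝ → F} {a b : ℝ} (hab : a ≤ b)
    (hf : ∀ x ∈ Icc a b, HasDerivWithinAt f 0 (Icc a b) x) : f b = f a :=
  constant_of_has_deriv_right_zero (fun x hx => (hf x hx).continuousWithinAt)
    (fun x hx => (hf x (Ico_subset_Icc_self hx)).mono_of_mem_nhdsWithin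
      (Icc_mem_nhdsGE_of_mem hx))
    b (right_mem_Icc.2 hab)

namespace Moser

variable {E : Type*} [NormedAddCommGroup E] [NormedSpace ℝ E]
  {μ ν : E → ℝ} {v : E → E} {t : ℝ} {w : E}

def density (μ ν : E → ℝ) (t : ℝ) (w : E) : ℝ := t * ν w + (1 - t) * μ w

def vectorField (μ ν : E → ℝ) (v : E → E) (t : ℝ) (w : E) : E :=
  (density μ ν t w)⁻¹ • v w

theorem hasFDerivAt_density (hμ : DifferentiableAt ℝ μ w) (hν : DifferentiableAt ℝ ν w) :
    HasFDerivAt (density μ ν t) (t • fderiv ℝ ν w + (1 - t) • fderiv ℝ μ w) w :=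
  (hν.hasFDerivAt.const_mul t).add (hμ.hasFDerivAt.const_mul (1 - t))

theorem hasDerivWithinAt_density_comp {φ : ℝ → E} {φ' : E} {s : Set ℝ}
    (hφ : HasDerivWithinAt φ φ' s t)
    (hμ : DifferentiableAt ℝ μ (φ t)) (hν : DifferentiableAt ℝ ν (φ t)) :
    HasDerivWithinAt (fun τ => density μ ν τ (φ τ))
      (ν (φ t) - μ (φ t) + fderiv ℝ (density μ ν t) (φ t) φ') s t := by
  have hνφ := hν.hasFDerivAt.comp_hasDerivWithinAt t hφ
  have hμφ := hμ.hasFDerivAt.comp_hasDerivWithinAt t hφ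
  refine (((hasDerivWithinAt_id t s).mul hνφ).add
    (((hasDerivWithinAt_const t s 1).sub (hasDerivWithinAt_id t s)).mul hμφ)).congr_deriv ?_
  simp only [Function.comp_apply, id_eq, Pi.sub_apply, add_apply, smul_apply, smul_eq_mul,
    (hasFDerivAt_density (t := t) hμ hν).fderiv]
  ring

theorem differentiableAt_vectorField (hμ : DifferentiableAt ℝ μ w)
    (hν : DifferentiableAt ℝ ν w) (hv : DifferentiableAt ℝ v w) (hρ : density μ ν t w ≠ 0) :
    DifferentiableAt ℝ (vectorField μ ν v t) w :=
  ((hasFDerivAt_density hμ hν).differentiableAt.inv hρ).smul hv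

variable [FiniteDimensional ℝ E]

theorem trace_fderiv_vectorField (hμ : Differentiable ℝ μ) (hν : Differentiable ℝ ν)
    (hv : Differentiable ℝ v) (hρ : ∀ w, density μ ν t w ≠ 0) :
    density μ ν t w * LinearMap.trace ℝ E (fderiv ℝ (vectorField μ ν v t) w : E →ₗ[ℝ] E) +
      fderiv ℝ (density μ ν t) w (vectorField μ ν v t w) =
      LinearMap.trace ℝ E (fderiv ℝ v w : E →ₗ[ℝ] E) := by
  have hv_eq : v = fun y => density μ ν t y • vectorField μ ν v t y := by
    ext1 y
    exact (smul_inv_smul₀ (hρ y) (v y)).symm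
  conv_rhs => rw [hv_eq]
  rw [trace_fderiv_smul (hasFDerivAt_density (hμ w) (hν w)).differentiableAt
    (differentiableAt_vectorField (hμ w) (hν w) (hv w) (hρ w))]

theorem hasDerivWithinAt_det_mul_density (hE : Module.finrank ℝ E = 2)
    (hμ : Differentiable ℝ μ) (hν : Differentiable ℝ ν) (hv : Differentiable ℝ v)
    (hρ : ∀ w, density μ ν t w ≠ 0) {φ : ℝ → E} {A : ℝ → E →L[ℝ] E} {s : Set ℝ}
    (hdiv : LinearMap.trace ℝ E (fderiv ℝ v (φ t) : E →ₗ[ℝ] E) = μ (φ t) - ν (φ t))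
    (hφ : HasDerivWithinAt φ (vectorField μ ν v t (φ t)) s t)
    (hA : HasDerivWithinAt A (fderiv ℝ (vectorField μ ν v t) (φ t) ∘L A t) s t) :
    HasDerivWithinAt (fun τ => LinearMap.det (A τ : E →ₗ[ℝ] E) * density μ ν τ (φ τ))
      0 s t := by
  have htrace := trace_fderiv_vectorField (w := φ t) hμ hν hv hρ
  rw [hdiv] at htrace
  refine ((hasDerivWithinAt_det_of_finrank_eq_two hE hA).mul
    (hasDerivWithinAt_density_comp hφ (hμ _) (hν _))).congr_deriv ?_
  linear_combination LinearMap.det (A t : E →ₗ[ℝ] E) * htrace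

end Moser

/-- Moser/Dacorogna–Moser interpolation. If `div v = μ − ν`, the densities
`t ν + (1−t) μ` are positive, and `Φ` is the flow of the time-dependent vector field
`v_t = v / (t ν + (1−t) μ)` with `Φ(0,·) = id`, then the time-1 map `φ = Φ(1,·)` satisfies
`det(Dφ(z)) · ν(φ(z)) = μ(z)`, i.e. `φ` pushes `μ(z) dz` forward to `ν(w) dw`. -/
theorem moser_flow_pushforward
    (μ ν : E2 → ℝ) (hμ : ContDiff ℝ 1 μ) (hν : ContDiff ℝ 1 ν)
    (hpos : ∀ t ∈ Icc (0:ℝ) 1, ∀ z : E2, 0 < t * ν z + (1 - t) * μ z)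
    (v : E2 → E2) (hv : ContDiff ℝ 1 v)
    (hdiv : ∀ z : E2, LinearMap.trace ℝ E2 (fderiv ℝ v z : E2 →ₗ[ℝ] E2) = μ z - ν z)
    (Φ : ℝ × E2 → E2) (hΦ : ContDiff ℝ 2 Φ)
    (hΦ0 : ∀ z : E2, Φ (0, z) = z)
    (hΦt : ∀ t ∈ Icc (0:ℝ) 1, ∀ z : E2,
      HasDerivWithinAt (fun s => Φ (s, z))
        ((t * ν (Φ (t, z)) + (1 - t) * μ (Φ (t, z)))⁻¹ • v (Φ (t, z)))
        (Icc (0:ℝ) 1) t) :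
    ∀ z : E2,
      LinearMap.det (fderiv ℝ (fun w => Φ (1, w)) z : E2 →ₗ[ℝ] E2) * ν (Φ (1, z)) = μ z := by
  intro z
  have hμ' := hμ.differentiable one_ne_zero
  have hν' := hν.differentiable one_ne_zero
  have hv' := hv.differentiable one_ne_zero
  have hconst : ∀ t ∈ Icc (0:ℝ) 1, HasDerivWithinAt
      (fun τ => LinearMap.det (fderiv ℝ (fun w => Φ (τ, w)) z : E2 →ₗ[ℝ] E2) *
        Moser.density μ ν τ (Φ (τ, z))) 0 (Icc 0 1) t := by
    intro t ht
    have hρ : ∀ w, Moser.density μ ν t w ≠ 0 := fun w => (hpos t ht w).ne'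
    exact Moser.hasDerivWithinAt_det_mul_density finrank_euclideanSpace_fin hμ' hν' hv' hρ
      (hdiv _) (hΦt t ht z) (hasDerivAt_fderiv_flow hΦ (g := Moser.vectorField μ ν v t)
        (uniqueDiffOn_Icc zero_lt_one t ht) (hΦt t ht)
        (Moser.differentiableAt_vectorField (hμ' _) (hν' _) (hv' _) (hρ _))).hasDerivWithinAt
  have hid : fderiv ℝ (fun w => Φ (0, w)) z = ContinuousLinearMap.id ℝ E2 := by
    simp [hΦ0]
  simpa [Moser.density, hid, hΦ0] using eq_of_hasDerivWithinAt_zero_Icc zero_le_one hconst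
end
end

section
/- Let w : ℝ × ℝ² → ℝ² be continuous and Lipschitz in its second variable uniformly in the first, and suppose ⟨w(t, z), z⟩ = 0 for every t ∈ ℝ and every z ∈ ℝ² with ‖z‖ = 1. If γ : ℝ → ℝ² is differentiable with γ'(t) = w(t, γ(t)) for all t and ‖γ(0)‖ = 1, then ‖γ(t)‖ = 1 for all t ∈ ℝ. -/
open scoped NNReal RealInnerProductSpace

noncomputable section

local notation "E2" => EuclideanSpace ℝ (Fin 2)

/-!
The defect `f t = ‖γ t‖² - 1` vanishes at `0` and satisfies `|f'| ≤ 2K |f|`: projecting `z` radially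
onto the unit sphere, tangency kills `⟨w(t, z/‖z‖), z⟩`, and the Lipschitz bound controls the rest by
`K |‖z‖ - 1| ‖z‖ ≤ K |‖z‖² - 1|`. Grönwall's inequality, run forwards and backwards in time, then
forces `f ≡ 0`.
-/

theorem eq_zero_of_norm_deriv_le_mul_norm {E : Type*} [NormedAddCommGroup E] [NormedSpace ℝ E]
    {f f' : ℝ → E} {K a : ℝ} (hf : ∀ t, HasDerivAt f (f' t) t)
    (bound : ∀ t, ‖f' t‖ ≤ K * ‖f t‖) (ha : f a = 0) (t : ℝ) : f t = 0 := by
  rcases le_total a t with hat | hta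
  · exact eq_zero_of_abs_deriv_le_mul_abs_self_of_eq_zero_right
      (fun s _ => (hf s).continuousAt.continuousWithinAt) (fun s _ => (hf s).hasDerivWithinAt)
      ha (fun s _ => bound s) t ⟨hat, le_rfl⟩
  · have hrev : ∀ s, HasDerivAt (fun s => f (-s)) (-f' (-s)) s := fun s => by
      simpa [Function.comp_def] using (hf (-s)).scomp s (hasDerivAt_neg s)
    simpa using eq_zero_of_abs_deriv_le_mul_abs_self_of_eq_zero_right
      (fun s _ => (hrev s).continuousAt.continuousWithinAt) (fun s _ => (hrev s).hasDerivWithinAt)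
      (by simpa using ha) (fun s _ => by simpa using bound (-s)) (-t) ⟨neg_le_neg hta, le_rfl⟩

section

variable {E : Type*} [NormedAddCommGroup E] [InnerProductSpace ℝ E]

theorem abs_inner_le_of_lipschitzWith_of_tangent {v : E → E} {K : ℝ≥0} (hv : LipschitzWith K v)
    (htan : ∀ u : E, ‖u‖ = 1 → ⟪v u, u⟫ = 0) (z : E) : |⟪v z, z⟫| ≤ K * |‖z‖ ^ 2 - 1| := by
  rcases eq_or_ne z 0 with rfl | hz
  · simp
  have hzn : 0 < ‖z‖ := norm_pos_iff.mpr hz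
  set u : E := ‖z‖⁻¹ • z
  have hu : ‖u‖ = 1 := by simp [u, norm_smul, hzn.ne']
  have hvu : ⟪v u, z⟫ = 0 := by
    rw [← smul_inv_smul₀ hzn.ne' z, real_inner_smul_right, htan u hu, mul_zero]
  have hzu : ‖z - u‖ = |‖z‖ - 1| := by
    rw [show z - u = (1 - ‖z‖⁻¹) • z by simp [u, sub_smul], norm_smul, Real.norm_eq_abs,
      ← abs_norm z, ← abs_mul, abs_norm, sub_mul, inv_mul_cancel₀ hzn.ne', one_mul, abs_sub_comm]
  calc |⟪v z, z⟫| = |⟪v z - v u, z⟫| := by rw [inner_sub_left, hvu, sub_zero]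
    _ ≤ ‖v z - v u‖ * ‖z‖ := abs_real_inner_le_norm _ _
    _ ≤ K * |‖z‖ - 1| * ‖z‖ := by
        gcongr
        simpa [dist_eq_norm, hzu] using hv.dist_le_mul z u
    _ ≤ K * (|‖z‖ - 1| * (‖z‖ + 1)) := by rw [mul_assoc]; gcongr; linarith
    _ = K * |‖z‖ ^ 2 - 1| := by
        rw [← abs_of_pos (by positivity : 0 < ‖z‖ + 1), ← abs_mul]
        ring_nf

theorem norm_eq_one_of_hasDerivAt_of_tangent {v : ℝ → E → E} {K : ℝ≥0}
    (hv : ∀ t, LipschitzWith K (v t)) (htan : ∀ t (u : E), ‖u‖ = 1 → ⟪v t u, u⟫ = 0)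
    {γ : ℝ → E} (hγ : ∀ t, HasDerivAt γ (v t (γ t)) t) {t₀ : ℝ} (h₀ : ‖γ t₀‖ = 1) (t : ℝ) :
    ‖γ t‖ = 1 := by
  have hdefect : ∀ s, HasDerivAt (fun s => ‖γ s‖ ^ 2 - 1) (2 * ⟪γ s, v s (γ s)⟫) s :=
    fun s => ((hγ s).norm_sq).sub_const 1
  have bound : ∀ s, ‖2 * ⟪γ s, v s (γ s)⟫‖ ≤ 2 * K * ‖‖γ s‖ ^ 2 - 1‖ := fun s => by
    rw [Real.norm_eq_abs, Real.norm_eq_abs, abs_mul, abs_two, real_inner_comm, mul_assoc]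
    exact mul_le_mul_of_nonneg_left
      (abs_inner_le_of_lipschitzWith_of_tangent (hv s) (htan s) (γ s)) zero_le_two
  have hdefect_t : ‖γ t‖ ^ 2 - 1 = 0 :=
    eq_zero_of_norm_deriv_le_mul_norm hdefect bound (a := t₀) (by simp [h₀]) t
  exact (pow_eq_one_iff_of_nonneg (norm_nonneg _) two_ne_zero).mp (sub_eq_zero.mp hdefect_t)

end

theorem unit_circle_invariant_general
    (w : ℝ × E2 → E2)
    (K : ℝ≥0) (hlip : ∀ t : ℝ, LipschitzWith K fun z : E2 => w (t, z))
    (htan : ∀ (t : ℝ) (z : E2), ‖z‖ = 1 → (inner ℝ (w (t, z)) z : ℝ) = 0)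
    (γ : ℝ → E2) (hγ : ∀ t, HasDerivAt γ (w (t, γ t)) t)
    (hγ0 : ‖γ 0‖ = 1) :
    ∀ t : ℝ, ‖γ t‖ = 1 :=
  norm_eq_one_of_hasDerivAt_of_tangent (v := fun t z => w (t, z)) hlip htan hγ hγ0

/-- The unit circle is invariant under the flow of a continuous time-dependent
vector field that is uniformly Lipschitz in the space variable and tangent to the unit
circle: if `⟨w(t,z), z⟩ = 0` whenever `‖z‖ = 1`, `γ' t = w(t, γ t)` and `‖γ 0‖ = 1`, then
`‖γ t‖ = 1` for all `t`. -/
theorem unit_circle_invariant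
    (w : ℝ × E2 → E2) (hw : Continuous w)
    (K : ℝ≥0) (hlip : ∀ t : ℝ, LipschitzWith K fun z : E2 => w (t, z))
    (htan : ∀ (t : ℝ) (z : E2), ‖z‖ = 1 → (inner ℝ (w (t, z)) z : ℝ) = 0)
    (γ : ℝ → E2) (hγ : ∀ t, HasDerivAt γ (w (t, γ t)) t)
    (hγ0 : ‖γ 0‖ = 1) :
    ∀ t : ℝ, ‖γ t‖ = 1 :=
  unit_circle_invariant_general w K hlip htan γ hγ hγ0
end
end

section
/- Fix n ≥ 1 and d ≥ 1, and let X = (x₁,…,xₙ) and X' = (x'₁,…,x'ₙ) be sequences in ℝ^d, each with nonzero centroid size. If d_P(X, X') = 0, where d_P(X, X') := inf over Euclidean transformations R of ℝ^d of (Σ_{i=1}^n ‖R(xᵢ)/S_X − x'ᵢ/S_{X'}‖²)^{1/2} with S_X, S_{X'} the centroid sizes, then X and X' have the same shape: there exist α > 0, an orthogonal transformation U of ℝ^d, and t ∈ ℝ^d such that x'ᵢ = α U xᵢ + t for all i = 1,…,n. -/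
noncomputable section

/-- The centroid of a finite sequence of points in `ℝ^d`. -/
def centroid (n d : ℕ) (X : Fin n → EuclideanSpace ℝ (Fin d)) :
    EuclideanSpace ℝ (Fin d) :=
  (n : ℝ)⁻¹ • ∑ i, X i

/-- The centroid size `S_X = (n⁻¹ Σᵢ ‖xᵢ − x̄‖²)^{1/2}`. -/
def centroidSize (n d : ℕ) (X : Fin n → EuclideanSpace ℝ (Fin d)) : ℝ :=
  Real.sqrt ((n : ℝ)⁻¹ * ∑ i, ‖X i - centroid n d X‖ ^ 2)

/-- The classical Procrustes distance
`d_P(X,X') = inf_R (Σᵢ ‖R(xᵢ)/S_X − x'ᵢ/S_{X'}‖²)^{1/2}`, the infimum over all Euclidean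
transformations (affine isometries) `R` of `ℝ^d`. -/
def procrustesDist (n d : ℕ) (X X' : Fin n → EuclideanSpace ℝ (Fin d)) : ℝ :=
  ⨅ R : EuclideanSpace ℝ (Fin d) ≃ᵃⁱ[ℝ] EuclideanSpace ℝ (Fin d),
    Real.sqrt (∑ i,
      ‖(centroidSize n d X)⁻¹ • R (X i) - (centroidSize n d X')⁻¹ • X' i‖ ^ 2)

/-! Since the infimum vanishes, there are Euclidean transformations `R k` with
`R k (xᵢ) → (S_X / S_{X'}) • x'ᵢ` for every `i`. Their linear parts lie in the unit ball of the
finite-dimensional space of operators, so a subsequence converges pointwise to a linear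
isometry `U`, and passing to the limit in `R k xᵢ = R k x₀ + (linear part) (xᵢ - x₀)`
exhibits `(S_X / S_{X'}) • X'` as the image of `X` under `x ↦ U x + t`. -/

open Filter Topology

theorem exists_seq_tendsto_zero_of_iInf_sqrt_sum_sq_eq_zero {α ι E : Type*} [Nonempty α]
    [Fintype ι] [SeminormedAddCommGroup E] (v : α → ι → E)
    (h : ⨅ a, √(∑ i, ‖v a i‖ ^ 2) = 0) :
    ∃ a : ℕ → α, ∀ i, Tendsto (fun k => v (a k) i) atTop (𝓝 0) := by
  obtain ⟨u, -, hu, hu_mem⟩ :=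
    exists_seq_tendsto_sInf (Set.range_nonempty fun a => √(∑ i, ‖v a i‖ ^ 2))
      ⟨0, Set.forall_mem_range.2 fun a => Real.sqrt_nonneg _⟩
  choose a ha using hu_mem
  rw [sInf_range, h] at hu
  refine ⟨a, fun i => ?_⟩
  have hL2 : Tendsto (fun k => WithLp.toLp 2 (v (a k))) atTop (𝓝 0) := by
    rw [tendsto_zero_iff_norm_tendsto_zero]
    exact hu.congr fun k => by rw [PiLp.norm_eq_of_L2, ← ha k]
  exact ((PiLp.continuous_apply 2 (fun _ : ι => E) i).tendsto 0).comp hL2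

section FiniteDimensional

variable {𝕜 E F : Type*} [NontriviallyNormedField 𝕜] [LocallyCompactSpace 𝕜]
  [NormedAddCommGroup E] [NormedSpace 𝕜 E] [FiniteDimensional 𝕜 E]
  [NormedAddCommGroup F] [NormedSpace 𝕜 F] [FiniteDimensional 𝕜 F]

theorem LinearIsometry.exists_subseq_tendsto (L : ℕ → E →ₗᵢ[𝕜] F) :
    ∃ (T : E →ₗᵢ[𝕜] F) (φ : ℕ → ℕ), StrictMono φ ∧
      ∀ x, Tendsto (fun k => L (φ k) x) atTop (𝓝 (T x)) := by
  have := FiniteDimensional.proper 𝕜 (E →L[𝕜] F)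
  have hball : ∀ k, (L k).toContinuousLinearMap ∈ Metric.closedBall 0 1 := fun k => by
    simpa using (L k).norm_toContinuousLinearMap_le
  obtain ⟨T, -, φ, hφ, hT⟩ := tendsto_subseq_of_bounded Metric.isBounded_closedBall hball
  have hpt : ∀ x, Tendsto (fun k => L (φ k) x) atTop (𝓝 (T x)) := fun x =>
    ((ContinuousLinearMap.apply 𝕜 F x).continuous.tendsto T).comp hT
  have hnorm : ∀ x, ‖T x‖ = ‖x‖ := fun x => tendsto_nhds_unique (hpt x).norm (by simp)
  exact ⟨⟨T, hnorm⟩, φ, hφ, hpt⟩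

theorem AffineIsometryEquiv.exists_eq_of_tendsto {ι : Type*} (R : ℕ → E ≃ᵃⁱ[𝕜] E)
    (x y : ι → E) (h : ∀ i, Tendsto (fun k => R k (x i)) atTop (𝓝 (y i))) :
    ∃ (U : E ≃ₗᵢ[𝕜] E) (t : E), ∀ i, y i = U (x i) + t := by
  rcases isEmpty_or_nonempty ι with hι | ⟨⟨i₀⟩⟩
  · exact ⟨LinearIsometryEquiv.refl 𝕜 E, 0, hι.elim⟩
  obtain ⟨T, φ, hφ, hT⟩ :=
    LinearIsometry.exists_subseq_tendsto fun k => (R k).linearIsometryEquiv.toLinearIsometry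
  refine ⟨T.toLinearIsometryEquiv rfl, y i₀ - T (x i₀), fun i => ?_⟩
  have hdecomp : ∀ k, R k (x i) = (R k).linearIsometryEquiv (x i - x i₀) + R k (x i₀) :=
    fun k => by rw [← vsub_eq_sub, AffineIsometryEquiv.map_vsub, vsub_eq_sub, sub_add_cancel]
  have hlim : Tendsto (fun k => R (φ k) (x i)) atTop (𝓝 (T (x i - x i₀) + y i₀)) := by
    simp only [hdecomp]
    exact (hT _).add ((h i₀).comp hφ.tendsto_atTop)
  rw [tendsto_nhds_unique ((h i).comp hφ.tendsto_atTop) hlim, map_sub,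
    LinearIsometry.coe_toLinearIsometryEquiv]
  abel

end FiniteDimensional

theorem centroidSize_nonneg (n d : ℕ) (X : Fin n → EuclideanSpace ℝ (Fin d)) :
    0 ≤ centroidSize n d X :=
  Real.sqrt_nonneg _

theorem procrustesDist_eq_zero_same_shape_general
    (n d : ℕ)
    (X X' : Fin n → EuclideanSpace ℝ (Fin d))
    (hX : centroidSize n d X ≠ 0) (hX' : centroidSize n d X' ≠ 0)
    (hzero : procrustesDist n d X X' = 0) :
    ∃ α : ℝ, 0 < α ∧
      ∃ (U : EuclideanSpace ℝ (Fin d) ≃ₗᵢ[ℝ] EuclideanSpace ℝ (Fin d))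
        (t : EuclideanSpace ℝ (Fin d)),
        ∀ i, X' i = α • U (X i) + t := by
  obtain ⟨R, hR⟩ := exists_seq_tendsto_zero_of_iInf_sqrt_sum_sq_eq_zero
    (fun (R : EuclideanSpace ℝ (Fin d) ≃ᵃⁱ[ℝ] EuclideanSpace ℝ (Fin d)) i =>
      (centroidSize n d X)⁻¹ • R (X i) - (centroidSize n d X')⁻¹ • X' i) hzero
  have ha := (centroidSize_nonneg n d X).lt_of_ne' hX
  have hb := (centroidSize_nonneg n d X').lt_of_ne' hX'
  set a := centroidSize n d X
  set b := centroidSize n d X'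
  have hlim : ∀ i, Tendsto (fun k => R k (X i)) atTop (𝓝 ((a / b) • X' i)) := fun i => by
    simpa [smul_smul, hX, div_eq_mul_inv] using ((hR i).add_const (b⁻¹ • X' i)).const_smul a
  obtain ⟨U, t, hUt⟩ := AffineIsometryEquiv.exists_eq_of_tendsto R X _ hlim
  refine ⟨b / a, div_pos hb ha, U, (b / a) • t, fun i => ?_⟩
  rw [← smul_add, ← hUt, smul_smul, div_mul_div_comm, mul_comm b, div_self (mul_ne_zero hX hX'),
    one_smul]

/-- If the classical Procrustes distance between two sequences with nonzero
centroid sizes vanishes, then the sequences have the same shape: one is the image of the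
other under a similarity transformation `x ↦ α U x + t` with `α > 0`, `U` orthogonal. -/
theorem procrustesDist_eq_zero_same_shape
    (n d : ℕ) (hn : 1 ≤ n) (hd : 1 ≤ d)
    (X X' : Fin n → EuclideanSpace ℝ (Fin d))
    (hX : centroidSize n d X ≠ 0) (hX' : centroidSize n d X' ≠ 0)
    (hzero : procrustesDist n d X X' = 0) :
    ∃ α : ℝ, 0 < α ∧
      ∃ (U : EuclideanSpace ℝ (Fin d) ≃ₗᵢ[ℝ] EuclideanSpace ℝ (Fin d))
        (t : EuclideanSpace ℝ (Fin d)),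
        ∀ i, X' i = α • U (X i) + t :=
  procrustesDist_eq_zero_same_shape_general n d X X' hX hX' hzero
end
end
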